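/- arXiv:2205.05122 — 10 statements merged into one kernel-verified Lean document; each statement's English description precedes it below -/
import Mathlib

section
/- For n ≥ 3, the Q-ary selvage core C⊙_Q is not tree-decodable. -/
open scoped Classical

/-- A `Q`-ary word: for each channel `i`, a finite string over the alphabet `Fin (Q i)`. -/
abbrev Word {n : ℕ} (Q : Fin n → ℕ) : Type := (i : Fin n) → List (Fin (Q i))

/-- Two `Q`-ary words are prefix-free if on some channel neither component is a
prefix of the other. -/
def PrefixFree {n : ℕ} {Q : Fin n → ℕ} (c c' : Word Q) : Prop :=
  ∃ i : Fin n, ¬ (c i <+: c' i) ∧ ¬ (c' i <+: c i)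

/-- The set obtained from `C` by keeping the words whose `i`-th component begins with
the symbol `a` and deleting that first symbol. -/
noncomputable def child {n : ℕ} {Q : Fin n → ℕ} (C : Finset (Word Q)) (i : Fin n)
    (a : Fin (Q i)) : Finset (Word Q) :=
  (C.filter (fun c => (c i).head? = some a)).image
    (fun c => Function.update c i (c i).tail)

/-- Tree-decodability of a finite set of `Q`-ary words. -/
inductive TreeDecodable {n : ℕ} (Q : Fin n → ℕ) : Finset (Word Q) → Prop
  | empty : TreeDecodable Q ∅
  | single : TreeDecodable Q {(fun _ => [] : Word Q)}
  | node (C : Finset (Word Q)) (i : Fin n)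
      (hne : ∀ c ∈ C, c i ≠ [])
      (h : ∀ a : Fin (Q i), TreeDecodable Q (child C i a)) :
      TreeDecodable Q C

/-- Descriptive length of a word, in nats. -/
noncomputable def dlen {n : ℕ} (Q : Fin n → ℕ) (c : Word Q) : ℝ :=
  ∑ i : Fin n, (c i).length * Real.log (Q i)

/-- The `j`-th codeword of the `Q`-ary selvage core. -/
def selvageCore {n : ℕ} (Q : Fin n → ℕ) (hQ : ∀ i, 2 ≤ Q i) (j : Fin n) : Word Q :=
  fun i =>
    if i = j then []
    else if (i : ℕ) = ((j : ℕ) + 1) % n then [⟨1, by have := hQ i; omega⟩]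
    else [⟨0, by have := hQ i; omega⟩]

/-- The `Q`-ary selvage core as a finite set. -/
noncomputable def selvageCoreSet {n : ℕ} (Q : Fin n → ℕ) (hQ : ∀ i, 2 ≤ Q i) :
    Finset (Word Q) :=
  Finset.univ.image (selvageCore Q hQ)

/-- The `Q`-ary selvage code: the selvage core together with all the words each of whose
components has length exactly one and which are prefix-free with every core word. -/
noncomputable def selvageCode {n : ℕ} (Q : Fin n → ℕ) (hQ : ∀ i, 2 ≤ Q i) :
    Finset (Word Q) :=
  selvageCoreSet Q hQ ∪
    ((Finset.univ : Finset ((i : Fin n) → Fin (Q i))).image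
        (fun f => (fun i => [f i] : Word Q))).filter
      (fun s => ∀ j : Fin n, PrefixFree s (selvageCore Q hQ j))

/-- A part `J` is separated from `Q`. -/
def Separated {n : ℕ} (Q : Fin n → ℕ) (J : Finset (Fin n)) : Prop :=
  ∀ x : Fin n → ℕ, (∏ i, Q i ^ x i) = (∏ i ∈ Jᶜ, Q i) → ∀ i ∈ J, x i = 0

/-- The `R`-ary selvage probability assembly, indexed canonically: the first `t`
probabilities are `r_j / N`, the remaining `N - Σ r_j` ones are `1 / N`. -/
noncomputable def spa {t : ℕ} (R : Fin t → ℕ) :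
    Fin (t + ((∏ j, R j) - (∑ j, R j))) → ℝ :=
  fun j => if h : (j : ℕ) < t then (R ⟨j, h⟩ : ℝ) / (∏ i, R i) else 1 / (∏ i, R i)

/-- A uniquely decodable finite family of `Q`-ary words. -/
def UniquelyDecodable {n m : ℕ} {Q : Fin n → ℕ} (c : Fin m → Word Q) : Prop :=
  Function.Injective
    (fun L : List (Fin m) => (fun i : Fin n => (L.map fun j => c j i).flatten : Word Q))

/-- The block of the word `w` in the container of side lengths `q_i ^ L_i`. -/
def block {n : ℕ} (Q : Fin n → ℕ) (L : Fin n → ℕ) (w : Word Q) : Set (Word Q) :=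
  {x | ∀ i, (x i).length = L i ∧ w i <+: x i}
/-- For `n ≥ 3`, the selvage core is not tree-decodable. -/
theorem stmt2 {n : ℕ} (hn : 3 ≤ n) (Q : Fin n → ℕ) (hQ : ∀ i, 2 ≤ Q i) :
    ¬ TreeDecodable Q (selvageCoreSet Q hQ) := by
  have hnpos : 0 < n := by omega
  intro h
  generalize hC : selvageCoreSet Q hQ = C at h
  cases h with
  | empty =>
    have : selvageCore Q hQ ⟨0, hnpos⟩ ∈ selvageCoreSet Q hQ := by
      simp [selvageCoreSet]
    rw [hC] at this; simp at this
  | single =>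
    have : selvageCore Q hQ ⟨0, hnpos⟩ ∈ selvageCoreSet Q hQ := by
      simp [selvageCoreSet]
    rw [hC] at this
    simp only [Finset.mem_singleton] at this
    have h1 : selvageCore Q hQ ⟨0, hnpos⟩ ⟨1, by omega⟩ = [] := by
      rw [this]
    have hne : (⟨1, by omega⟩ : Fin n) ≠ ⟨0, hnpos⟩ := by
      simp [Fin.ext_iff]
    simp only [selvageCore, if_neg hne] at h1
    split at h1 <;> simp at h1
  | node C i hne h =>
    have hmem : selvageCore Q hQ i ∈ C := by
      rw [← hC]; simp [selvageCoreSet]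
    have := hne _ hmem
    simp [selvageCore] at this
end

section
/- For n ≥ 3, the Q-ary selvage code C§_Q is a Q-ary prefix code, i.e., its words are pairwise prefix-free. -/
open scoped Classical

lemma pf_symm {n : ℕ} {Q : Fin n → ℕ} {c c' : Word Q} (h : PrefixFree c c') :
    PrefixFree c' c := by obtain ⟨i, h1, h2⟩ := h; exact ⟨i, h2, h1⟩

lemma singleton_pf {q : ℕ} {a b : Fin q} (h : a ≠ b) :
    ¬ ([a] <+: [b]) ∧ ¬ ([b] <+: [a]) := by
  constructor
  · intro hp; exact h (by simpa [List.cons_prefix_cons] using hp)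
  · intro hp; exact h (by simpa [List.cons_prefix_cons, eq_comm] using hp)

lemma mod_succ_cases {j n : ℕ} (h : j < n) :
    ((j+1) % n = j+1 ∧ j+1 < n) ∨ ((j+1) % n = 0 ∧ j+1 = n) := by
  rcases Nat.lt_or_ge (j+1) n with h1 | h1
  · exact Or.inl ⟨Nat.mod_eq_of_lt h1, h1⟩
  · have h2 : j + 1 = n := by omega
    exact Or.inr ⟨by rw [h2, Nat.mod_self], h2⟩

lemma selvageCore_apply_one {n : ℕ} {Q : Fin n → ℕ} {hQ : ∀ i, 2 ≤ Q i}
    {j i : Fin n} (h1 : i ≠ j) (h2 : (i : ℕ) = ((j : ℕ) + 1) % n) :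
    selvageCore Q hQ j i = [⟨1, by have := hQ i; omega⟩] := by
  simp [selvageCore, h1, h2]

lemma selvageCore_apply_zero {n : ℕ} {Q : Fin n → ℕ} {hQ : ∀ i, 2 ≤ Q i}
    {j i : Fin n} (h1 : i ≠ j) (h2 : (i : ℕ) ≠ ((j : ℕ) + 1) % n) :
    selvageCore Q hQ j i = [⟨0, by have := hQ i; omega⟩] := by
  simp [selvageCore, h1, h2]

lemma core_pf {n : ℕ} (hn : 3 ≤ n) (Q : Fin n → ℕ) (hQ : ∀ i, 2 ≤ Q i)
    {j j' : Fin n} (h : j ≠ j') :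
    PrefixFree (selvageCore Q hQ j) (selvageCore Q hQ j') := by
  have hjv := j.isLt
  have hj'v := j'.isLt
  have hvne : (j : ℕ) ≠ (j' : ℕ) := fun he => h (Fin.ext he)
  have hmj := mod_succ_cases hjv
  have hmj' := mod_succ_cases hj'v
  by_cases hc : ((j:ℕ)+1) % n = (j':ℕ)
  · -- use channel i = (j'+1) % n
    set i : Fin n := ⟨((j':ℕ)+1) % n, by omega⟩ with hi
    have hiv : (i : ℕ) = ((j':ℕ)+1) % n := rfl
    have hij : i ≠ j := by simp [Fin.ext_iff, hiv]; omega
    have hij' : i ≠ j' := by simp [Fin.ext_iff, hiv]; omega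
    have hns : (i : ℕ) ≠ ((j:ℕ)+1) % n := by rw [hiv]; omega
    refine ⟨i, ?_⟩
    rw [selvageCore_apply_zero hij hns, selvageCore_apply_one hij' hiv]
    exact singleton_pf (by simp [Fin.ext_iff])
  · -- use channel i = (j+1) % n
    set i : Fin n := ⟨((j:ℕ)+1) % n, by omega⟩ with hi
    have hiv : (i : ℕ) = ((j:ℕ)+1) % n := rfl
    have hij : i ≠ j := by simp [Fin.ext_iff, hiv]; omega
    have hij' : i ≠ j' := by simp [Fin.ext_iff, hiv]; omega
    have hns : (i : ℕ) ≠ ((j':ℕ)+1) % n := by rw [hiv]; omega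
    refine ⟨i, ?_⟩
    rw [selvageCore_apply_one hij hiv, selvageCore_apply_zero hij' hns]
    exact singleton_pf (by simp [Fin.ext_iff])

lemma mem_selvageCode {n : ℕ} {Q : Fin n → ℕ} {hQ : ∀ i, 2 ≤ Q i} {c : Word Q}
    (h : c ∈ selvageCode Q hQ) :
    (∃ j, c = selvageCore Q hQ j) ∨
      ((∃ f : (i : Fin n) → Fin (Q i), c = fun i => [f i]) ∧
        ∀ j, PrefixFree c (selvageCore Q hQ j)) := by
  simp only [selvageCode, Finset.mem_union, selvageCoreSet, Finset.mem_image,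
    Finset.mem_filter, Finset.mem_univ, true_and] at h
  rcases h with ⟨j, hj⟩ | ⟨⟨f, hf⟩, hpf⟩
  · exact Or.inl ⟨j, hj.symm⟩
  · exact Or.inr ⟨⟨f, hf.symm⟩, hpf⟩

/-- For `n ≥ 3`, the selvage code is a prefix code: its words are
pairwise prefix-free. -/
theorem stmt3 {n : ℕ} (hn : 3 ≤ n) (Q : Fin n → ℕ) (hQ : ∀ i, 2 ≤ Q i) :
    ∀ c ∈ selvageCode Q hQ, ∀ c' ∈ selvageCode Q hQ, c ≠ c' → PrefixFree c c' := by
  intro c hc c' hc' hne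
  rcases mem_selvageCode hc with ⟨j, rfl⟩ | ⟨⟨f, rfl⟩, hpf⟩
  · rcases mem_selvageCode hc' with ⟨j', rfl⟩ | ⟨⟨f', rfl⟩, hpf'⟩
    · exact core_pf hn Q hQ (fun he => hne (by rw [he]))
    · exact pf_symm (hpf' j)
  · rcases mem_selvageCode hc' with ⟨j', rfl⟩ | ⟨⟨f', rfl⟩, hpf'⟩
    · exact hpf j'
    · have : ∃ i, f i ≠ f' i := by
        by_contra hno
        push_neg at hno
        exact hne (by funext i; rw [hno i])
      obtain ⟨i, hi⟩ := this
      exact ⟨i, singleton_pf hi⟩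
end

section
/- For n ≥ 3, the number of codewords of the Q-ary selvage code outside the selvage core is |C§_Q \ C⊙_Q| = ∏_{i<n} q_i − Σ_{i<n} q_i. -/
open scoped Classical

section StmtFiveAux

variable {n : ℕ} (Q : Fin n → ℕ) (hQ : ∀ i, 2 ≤ Q i)

/-- The non-empty symbol of core word `j` on channel `i`. -/
noncomputable def coreVal (j i : Fin n) : Fin (Q i) :=
  if (i : ℕ) = ((j : ℕ) + 1) % n then ⟨1, by have := hQ i; omega⟩
  else ⟨0, by have := hQ i; omega⟩

lemma selvageCore_apply_self (j : Fin n) : selvageCore Q hQ j j = [] := by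
  simp [selvageCore]

lemma selvageCore_apply_ne {i j : Fin n} (h : i ≠ j) :
    selvageCore Q hQ j i = [coreVal Q hQ j i] := by
  unfold selvageCore coreVal
  rw [if_neg h]
  split_ifs <;> rfl

lemma pf_iff (f : ∀ i, Fin (Q i)) (j : Fin n) :
    PrefixFree (fun i => [f i]) (selvageCore Q hQ j) ↔
      ∃ i, i ≠ j ∧ f i ≠ coreVal Q hQ j i := by
  constructor
  · rintro ⟨i, h1, h2⟩
    rcases eq_or_ne i j with rfl | hij
    · simp [selvageCore_apply_self] at h2
    · refine ⟨i, hij, fun he => h1 ?_⟩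
      show [f i] <+: selvageCore Q hQ j i
      rw [selvageCore_apply_ne Q hQ hij, he]
  · rintro ⟨i, hij, hne⟩
    refine ⟨i, ?_, ?_⟩
    · rw [selvageCore_apply_ne Q hQ hij]
      simpa [List.cons_prefix_cons] using hne
    · rw [selvageCore_apply_ne Q hQ hij]
      simpa [List.cons_prefix_cons] using hne.symm

/-- The set of alphabet tuples whose singleton word fails prefix-freeness with core word `j`. -/
noncomputable def badSet (j : Fin n) : Finset (∀ i, Fin (Q i)) :=
  Finset.univ.filter (fun f => ∀ i, i ≠ j → f i = coreVal Q hQ j i)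

lemma card_badSet (j : Fin n) : (badSet Q hQ j).card = Q j := by
  have hinj : Function.Injective
      (fun a : Fin (Q j) => Function.update (fun i => coreVal Q hQ j i) j a) := by
    intro a b hab
    simpa using congrFun hab j
  have himg : badSet Q hQ j =
      Finset.univ.image (fun a : Fin (Q j) =>
        Function.update (fun i => coreVal Q hQ j i) j a) := by
    ext f
    simp only [badSet, Finset.mem_filter, Finset.mem_image, Finset.mem_univ, true_and]
    constructor
    · intro h
      refine ⟨f j, funext fun i => ?_⟩
      rcases eq_or_ne i j with rfl | hij
      · simp
      · rw [Function.update_of_ne hij]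
        exact (h i hij).symm
    · rintro ⟨a, rfl⟩ i hij
      rw [Function.update_of_ne hij]
  rw [himg, Finset.card_image_of_injective _ hinj, Finset.card_univ, Fintype.card_fin]

lemma mod_succ_eq {n m : ℕ} (h : m < n) : (m + 1) % n = if m + 1 = n then 0 else m + 1 := by
  split_ifs with h1
  · rw [h1, Nat.mod_self]
  · exact Nat.mod_eq_of_lt (by omega)

lemma mod_succ_inj {n j k : ℕ} (hj : j < n) (hk : k < n)
    (h : (j + 1) % n = (k + 1) % n) : j = k := by
  rw [mod_succ_eq hj, mod_succ_eq hk] at h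
  split_ifs at h <;> omega

lemma mod_succ_cycle {n j k : ℕ} (hn : 3 ≤ n) (hj : j < n) (hk : k < n)
    (h1 : k = (j + 1) % n) (h2 : j = (k + 1) % n) : False := by
  rw [mod_succ_eq hj] at h1
  rw [mod_succ_eq hk] at h2
  split_ifs at h1 h2 <;> omega

lemma badSet_apply_val {f : ∀ i, Fin (Q i)} {j : Fin n}
    (hfj : ∀ i, i ≠ j → f i = coreVal Q hQ j i) {i : Fin n} (hij : i ≠ j) :
    ((f i : ℕ)) = if (i : ℕ) = ((j : ℕ) + 1) % n then 1 else 0 := by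
  rw [hfj i hij]
  unfold coreVal
  split_ifs <;> rfl

lemma badSet_pairwise (hn3 : 3 ≤ n) :
    ∀ j ∈ (Finset.univ : Finset (Fin n)), ∀ k ∈ (Finset.univ : Finset (Fin n)),
      j ≠ k → Disjoint (badSet Q hQ j) (badSet Q hQ k) := by
  intro j _ k _ hjk
  rw [Finset.disjoint_left]
  intro f hfj hfk
  simp only [badSet, Finset.mem_filter, Finset.mem_univ, true_and] at hfj hfk
  have hn0 : 0 < n := by omega
  have key : ∀ (j k : Fin n), j ≠ k →
      (∀ i, i ≠ j → f i = coreVal Q hQ j i) →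
      (∀ i, i ≠ k → f i = coreVal Q hQ k i) →
      (k : ℕ) = ((j : ℕ) + 1) % n := by
    intro j k hjk hfj hfk
    have hmod : ((j : ℕ) + 1) % n < n := Nat.mod_lt _ hn0
    set i1 : Fin n := ⟨((j : ℕ) + 1) % n, hmod⟩ with hi1def
    have hi1j : i1 ≠ j := by
      intro h
      have h2 : ((j : ℕ) + 1) % n = (j : ℕ) := congrArg Fin.val h
      rw [mod_succ_eq j.isLt] at h2
      split_ifs at h2 <;> omega
    by_contra hne
    have hi1k : i1 ≠ k := fun h => hne (by rw [← h])
    have e1 := badSet_apply_val Q hQ hfj hi1j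
    have e2 := badSet_apply_val Q hQ hfk hi1k
    rw [if_pos rfl] at e1
    by_cases hc : (i1 : ℕ) = ((k : ℕ) + 1) % n
    · have hjk2 : ((j : ℕ) + 1) % n = ((k : ℕ) + 1) % n := hc
      exact hjk (Fin.ext (mod_succ_inj j.isLt k.isLt hjk2))
    · rw [if_neg hc] at e2
      omega
  have h1 := key j k hjk hfj hfk
  have h2 := key k j hjk.symm hfk hfj
  exact mod_succ_cycle hn3 j.isLt k.isLt h1 h2

lemma card_good (hn3 : 3 ≤ n) :
    (Finset.univ.filter (fun f : ∀ i, Fin (Q i) =>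
        ∀ j, PrefixFree (fun i => [f i]) (selvageCore Q hQ j))).card
      = (∏ i, Q i) - (∑ i, Q i) := by
  classical
  set P : (∀ i, Fin (Q i)) → Prop :=
    fun f => ∀ j, PrefixFree (fun i => [f i]) (selvageCore Q hQ j) with hP
  have hU : (Finset.univ.biUnion (badSet Q hQ)).card = ∑ i, Q i := by
    rw [Finset.card_biUnion (badSet_pairwise Q hQ hn3)]
    simp [card_badSet]
  have hneg : Finset.univ.filter (fun f => ¬ P f) = Finset.univ.biUnion (badSet Q hQ) := by
    ext f
    simp only [Finset.mem_filter, Finset.mem_univ, true_and, Finset.mem_biUnion, badSet, hP]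
    rw [not_forall]
    constructor
    · rintro ⟨j, hj⟩
      refine ⟨j, fun i hij => ?_⟩
      by_contra hne
      exact hj ((pf_iff Q hQ f j).2 ⟨i, hij, hne⟩)
    · rintro ⟨j, hj⟩
      refine ⟨j, fun hpf => ?_⟩
      obtain ⟨i, hij, hne⟩ := (pf_iff Q hQ f j).1 hpf
      exact hne (hj i hij)
  have htot : (Finset.univ.filter P).card + (Finset.univ.filter (fun f => ¬ P f)).card
      = (Finset.univ : Finset (∀ i, Fin (Q i))).card :=
    Finset.card_filter_add_card_filter_not P
  have hcu : (Finset.univ : Finset (∀ i, Fin (Q i))).card = ∏ i, Q i := by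
    simp [Finset.card_univ, Fintype.card_pi]
  rw [hneg, hU, hcu] at htot
  exact Nat.eq_sub_of_add_eq htot

end StmtFiveAux

/-- For `n ≥ 3`, the number of codewords of the selvage code outside the
selvage core is `∏ q_i − Σ q_i`. -/
theorem stmt5 {n : ℕ} (hn : 3 ≤ n) (Q : Fin n → ℕ) (hQ : ∀ i, 2 ≤ Q i) :
    (selvageCode Q hQ \ selvageCoreSet Q hQ).card = (∏ i, Q i) - (∑ i, Q i) := by
  classical
  have hg : Function.Injective (fun f : ∀ i, Fin (Q i) => (fun i => [f i] : Word Q)) := by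
    intro a b hab
    funext i
    have := congrFun hab i
    simpa using this
  have hdisj : Disjoint
      (((Finset.univ : Finset ((i : Fin n) → Fin (Q i))).image
          (fun f => (fun i => [f i] : Word Q))).filter
        (fun s => ∀ j : Fin n, PrefixFree s (selvageCore Q hQ j)))
      (selvageCoreSet Q hQ) := by
    rw [Finset.disjoint_left]
    intro s hs hs2
    rw [Finset.mem_filter] at hs
    obtain ⟨f, -, rfl⟩ := Finset.mem_image.1 hs.1
    obtain ⟨j, -, hj⟩ := Finset.mem_image.1 hs2
    have h2 := congrFun hj j
    rw [selvageCore_apply_self] at h2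
    exact absurd h2 (List.cons_ne_nil _ _).symm
  unfold selvageCode
  rw [Finset.union_sdiff_left, Finset.sdiff_eq_self_iff_disjoint.2 hdisj,
    Finset.filter_image, Finset.card_image_of_injective _ hg]
  exact card_good Q hQ hn
end

section
/- For n ≥ 3, the Q-ary selvage code achieves the entropy bound on the Q-ary selvage probability assembly: assigning to the codeword c⊙_j the probability q_j/N for each j ∈ {0,…,n−1}, and assigning the probability 1/N to each of the k = N − Σ_{i<n} q_i codewords of C§_Q \ C⊙_Q (where N = ∏_{i<n} q_i), every codeword c with assigned probability p satisfies |c| = −ln p, and consequently the expected descriptive length Σ_c p(c)·|c| equals the entropy −Σ_c p(c)·ln p(c). -/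
open scoped Classical

/-- For `n ≥ 3`, the selvage code achieves the entropy bound on the selvage
probability assembly: assigning probability `q_j / N` to the core word `c⊙_j` and `1 / N`
to every other codeword (`N = ∏ q_i`), every codeword `c` satisfies `|c| = -ln (p c)`,
hence the expected descriptive length equals the entropy. -/
theorem stmt6 {n : ℕ} (hn : 3 ≤ n) (Q : Fin n → ℕ) (hQ : ∀ i, 2 ≤ Q i)
    (p : Word Q → ℝ)
    (hpcore : ∀ j : Fin n, p (selvageCore Q hQ j) = (Q j : ℝ) / (∏ i, Q i : ℕ))
    (hpunit : ∀ c ∈ selvageCode Q hQ \ selvageCoreSet Q hQ, p c = 1 / (∏ i, Q i : ℕ)) :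
    (∀ c ∈ selvageCode Q hQ, dlen Q c = -Real.log (p c)) ∧
    (∑ c ∈ selvageCode Q hQ, p c * dlen Q c =
      -∑ c ∈ selvageCode Q hQ, p c * Real.log (p c)) := by
  have hQ0 : ∀ i, (Q i : ℝ) ≠ 0 := fun i => by
    have := hQ i; positivity
  have hN0 : ((∏ i, Q i : ℕ) : ℝ) ≠ 0 := by
    push_cast
    exact Finset.prod_ne_zero_iff.mpr (fun i _ => hQ0 i)
  have hlogN : Real.log ((∏ i, Q i : ℕ) : ℝ) = ∑ i, Real.log (Q i) := by
    push_cast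
    exact Real.log_prod (fun i _ => hQ0 i)
  have key : ∀ c ∈ selvageCode Q hQ, dlen Q c = -Real.log (p c) := by
    intro c hc
    by_cases hcore : c ∈ selvageCoreSet Q hQ
    · obtain ⟨j, -, hj⟩ := Finset.mem_image.mp hcore
      subst hj
      rw [hpcore j]
      have hlen : ∀ i, ((selvageCore Q hQ j) i).length = if i = j then 0 else 1 := by
        intro i
        unfold selvageCore
        split_ifs <;> simp_all
      have hd : dlen Q (selvageCore Q hQ j)
          = (∑ i, Real.log (Q i)) - Real.log (Q j) := by
        unfold dlen
        calc ∑ i, ((selvageCore Q hQ j i).length : ℝ) * Real.log (Q i)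
            = ∑ i, (Real.log (Q i) - if i = j then Real.log (Q i) else 0) := by
              refine Finset.sum_congr rfl fun i _ => ?_
              rw [hlen i]; split_ifs <;> simp
          _ = _ := by
              rw [Finset.sum_sub_distrib, Finset.sum_ite_eq' Finset.univ j]
              simp
      rw [hd, Real.log_div (hQ0 j) hN0, hlogN]
      ring
    · have hp := hpunit c (Finset.mem_sdiff.mpr ⟨hc, hcore⟩)
      rw [hp, Real.log_div one_ne_zero hN0, Real.log_one, hlogN]
      have hmem : c ∈ ((Finset.univ : Finset ((i : Fin n) → Fin (Q i))).image
          (fun f => (fun i => [f i] : Word Q))).filter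
          (fun s => ∀ j : Fin n, PrefixFree s (selvageCore Q hQ j)) := by
        rcases Finset.mem_union.mp hc with h | h
        · exact absurd h hcore
        · exact h
      obtain ⟨f, -, hf⟩ := Finset.mem_image.mp (Finset.mem_filter.mp hmem).1
      subst hf
      unfold dlen
      simp
  refine ⟨key, ?_⟩
  rw [← Finset.sum_neg_distrib]
  exact Finset.sum_congr rfl fun c hc => by rw [key c hc]; ring
end

section
/- Let {J_0,…,J_{t−1}} be a partition of {0,…,n−1}. Suppose that for each j ∈ {0,…,t−1} there exists a prime p_j such that p_j divides q_i for every i ∈ J_j and p_j does not divide q_i for any i ∉ J_j. Then {J_0,…,J_{t−1}} is a t-separation of Q. -/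
open scoped Classical

/-- Natural separation, per-part form: if every part `J j` admits a prime
dividing `q_i` for every `i ∈ J j` and dividing no `q_i` with `i` outside `J j`, then
the partition is a `t`-separation of `Q`. -/
theorem stmt8 {n t : ℕ} (hn : 1 ≤ n) (Q : Fin n → ℕ) (hQ : ∀ i, 2 ≤ Q i)
    (J : Fin t → Finset (Fin n))
    (hdisj : ∀ j k : Fin t, j ≠ k → Disjoint (J j) (J k))
    (hcover : ∀ i : Fin n, ∃ j : Fin t, i ∈ J j)
    (hne : ∀ j : Fin t, (J j).Nonempty)
    (hprime : ∀ j : Fin t, ∃ p : ℕ, p.Prime ∧ (∀ i ∈ J j, p ∣ Q i) ∧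
      ∀ i : Fin n, i ∉ J j → ¬ p ∣ Q i) :
    ∀ j : Fin t, Separated Q (J j) := by
  intro j x hx i hi
  obtain ⟨p, hp, hdvd, hnd⟩ := hprime j
  by_contra h
  have h1 : p ∣ ∏ i, Q i ^ x i :=
    dvd_trans (dvd_pow (hdvd i hi) h) (Finset.dvd_prod_of_mem _ (Finset.mem_univ i))
  rw [hx] at h1
  obtain ⟨k, hk, hpk⟩ := hp.prime.exists_mem_finset_dvd h1
  exact hnd k (Finset.mem_compl.mp hk) hpk
end

section
/- Let t ≥ 3 and suppose Q admits a t-separation. Then there exist m ≥ 1 and positive real probabilities p_0,…,p_{m−1} summing to 1 such that: (a) there exists an injective assignment j ↦ c_j of pairwise prefix-free Q-ary words with Σ_{j<m} p_j·|c_j| = −Σ_{j<m} p_j·ln p_j (an entropy-achieving Q-ary prefix code on these probabilities); and (b) every injective assignment j ↦ c'_j of Q-ary words whose image is a tree-decodable set satisfies Σ_{j<m} p_j·|c'_j| > −Σ_{j<m} p_j·ln p_j. In particular, an optimal Q-ary tree-decodable code on these probabilities is not an optimal Q-ary prefix code, i.e., Q is above tree line. -/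
open scoped Classical

namespace Stmt9Aux

lemma head_cons_tail' {α : Type*} {l : List α} {a : α} (h : l.head? = some a) :
    l = a :: l.tail := by
  cases l with
  | nil => simp at h
  | cons b l => simp at h; subst h; rfl

lemma kraft {n : ℕ} {Q : Fin n → ℕ} {C : Finset (Word Q)} (hC : TreeDecodable Q C) :
    ∑ c ∈ C, (∏ i, ((Q i : ℝ)) ^ (c i).length)⁻¹ ≤ 1 := by
  induction hC with
  | empty => simp
  | single => simp
  | node C i hne h ih =>
    rcases C.eq_empty_or_nonempty with rfl | ⟨c0, hc0⟩
    · simp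
    have hQi : 0 < Q i := Fin.pos ((c0 i).head (hne c0 hc0))
    set w : Word Q → ℝ := fun c => (∏ i', ((Q i' : ℝ)) ^ (c i').length)⁻¹ with hw
    have hfib := Finset.sum_fiberwise C (fun c => (c i).head?) w
    rw [show ∑ c ∈ C, (∏ i, ((Q i : ℝ)) ^ (c i).length)⁻¹ = ∑ c ∈ C, w c from rfl, ← hfib,
      Fintype.sum_option]
    have hnone : (C.filter (fun c => (c i).head? = none)) = ∅ := by
      apply Finset.filter_false_of_mem
      intro c hc
      simp [hne c hc]
    rw [hnone, Finset.sum_empty, zero_add]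
    -- per-element scaling
    have hwupd : ∀ c : Word Q, c i ≠ [] →
        w c = (Q i : ℝ)⁻¹ * w (Function.update c i (c i).tail) := by
      intro c hc
      have hlen : (c i).length = (c i).tail.length + 1 := by
        cases hl : c i with
        | nil => exact absurd hl hc
        | cons a l => simp
      have e1 : (∏ i', ((Q i' : ℝ)) ^ ((Function.update c i (c i).tail) i').length)
          = ((Q i : ℝ)) ^ (c i).tail.length *
            ∏ i' ∈ Finset.univ.erase i, ((Q i' : ℝ)) ^ ((c i').length) := by
        rw [← Finset.mul_prod_erase Finset.univ _ (Finset.mem_univ i)]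
        congr 1
        · rw [Function.update_self]
        · exact Finset.prod_congr rfl fun i' hi' => by
            rw [Function.update_of_ne (Finset.ne_of_mem_erase hi')]
      have e2 : (∏ i', ((Q i' : ℝ)) ^ ((c i').length))
          = ((Q i : ℝ)) ^ ((c i).length) *
            ∏ i' ∈ Finset.univ.erase i, ((Q i' : ℝ)) ^ ((c i').length) :=
        (Finset.mul_prod_erase Finset.univ _ (Finset.mem_univ i)).symm
      rw [hw]
      simp only []
      rw [e1, e2, hlen, pow_succ]
      rw [mul_inv, mul_inv, mul_inv]
      ring
    have hstep : ∀ a : Fin (Q i),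
        ∑ c ∈ C.filter (fun c => (c i).head? = some a), w c ≤ (Q i : ℝ)⁻¹ := by
      intro a
      have hinj : ∀ c ∈ C.filter (fun c => (c i).head? = some a),
          ∀ c' ∈ C.filter (fun c => (c i).head? = some a),
          Function.update c i (c i).tail = Function.update c' i (c' i).tail → c = c' := by
        intro c hc c' hc' heq
        rw [Finset.mem_filter] at hc hc'
        funext i'
        by_cases hii : i' = i
        · subst hii
          have h1 := head_cons_tail' hc.2
          have h2 := head_cons_tail' hc'.2
          have := congrFun heq i'
          rw [Function.update_self, Function.update_self] at this
          rw [h1, h2, this]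
        · have := congrFun heq i'
          rwa [Function.update_of_ne hii, Function.update_of_ne hii] at this
      have himg : ∑ c' ∈ child C i a, w c'
          = ∑ c ∈ C.filter (fun c => (c i).head? = some a),
              w (Function.update c i (c i).tail) := by
        rw [child]
        exact Finset.sum_image hinj
      have hsc : ∑ c ∈ C.filter (fun c => (c i).head? = some a), w c
          = (Q i : ℝ)⁻¹ * ∑ c' ∈ child C i a, w c' := by
        rw [himg, Finset.mul_sum]
        apply Finset.sum_congr rfl
        intro c hc
        rw [Finset.mem_filter] at hc
        have : c i ≠ [] := hne c hc.1
        exact hwupd c this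
      rw [hsc]
      calc (Q i : ℝ)⁻¹ * ∑ c' ∈ child C i a, w c'
          ≤ (Q i : ℝ)⁻¹ * 1 := by
            apply mul_le_mul_of_nonneg_left (ih a)
            positivity
        _ = (Q i : ℝ)⁻¹ := mul_one _
    calc ∑ a : Fin (Q i), ∑ c ∈ C.filter (fun c => (c i).head? = some a), w c
        ≤ ∑ _a : Fin (Q i), (Q i : ℝ)⁻¹ := Finset.sum_le_sum fun a _ => hstep a
      _ = (Q i : ℝ) * (Q i : ℝ)⁻¹ := by
          rw [Finset.sum_const, Finset.card_univ, Fintype.card_fin, nsmul_eq_mul]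
      _ = 1 := by
          rw [mul_inv_cancel₀]
          exact_mod_cast hQi.ne'

lemma exists_root {n : ℕ} {Q : Fin n → ℕ} {C : Finset (Word Q)} (h : TreeDecodable Q C)
    (h2 : 2 ≤ C.card) : ∃ i : Fin n, ∀ c ∈ C, c i ≠ [] := by
  cases h with
  | empty => simp at h2
  | single => rw [Finset.card_singleton] at h2; omega
  | node C i hne h => exact ⟨i, hne⟩

end Stmt9Aux

namespace Stmt9Aux

def nxt (ht : 3 ≤ t) (j : Fin t) : Fin t := ⟨(j.1 + 1) % t, Nat.mod_lt _ (by omega)⟩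

lemma nxt_ne {t : ℕ} (ht : 3 ≤ t) (j : Fin t) : nxt ht j ≠ j := by
  have hj := j.2
  simp only [nxt, Ne, Fin.ext_iff]
  rcases Nat.lt_or_ge (j.1 + 1) t with h | h
  · rw [Nat.mod_eq_of_lt h]; omega
  · have h' : j.1 + 1 = t := by omega
    rw [h', Nat.mod_self]; omega

lemma nxt_nxt_ne {t : ℕ} (ht : 3 ≤ t) (j : Fin t) : nxt ht (nxt ht j) ≠ j := by
  have hj := j.2
  simp only [nxt, Ne, Fin.ext_iff]
  rcases Nat.lt_or_ge (j.1 + 1) t with h | h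
  · rw [Nat.mod_eq_of_lt h]
    rcases Nat.lt_or_ge (j.1 + 2) t with h2 | h2
    · rw [Nat.mod_eq_of_lt (by omega)]; omega
    · have h' : j.1 + 1 + 1 = t := by omega
      rw [h', Nat.mod_self]; omega
  · have h' : j.1 + 1 = t := by omega
    rw [h', Nat.mod_self]
    rw [Nat.mod_eq_of_lt (by omega)]; omega

lemma nxt_inj {t : ℕ} (ht : 3 ≤ t) {j k : Fin t} (h : nxt ht j = nxt ht k) : j = k := by
  have hj := j.2; have hk := k.2
  simp only [nxt, Fin.ext_iff] at h ⊢
  rcases Nat.lt_or_ge (j.1 + 1) t with h1 | h1 <;>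
    rcases Nat.lt_or_ge (k.1 + 1) t with h2 | h2
  · rw [Nat.mod_eq_of_lt h1, Nat.mod_eq_of_lt h2] at h; omega
  · have h' : k.1 + 1 = t := by omega
    rw [Nat.mod_eq_of_lt h1, h', Nat.mod_self] at h; omega
  · have h' : j.1 + 1 = t := by omega
    rw [h', Nat.mod_self, Nat.mod_eq_of_lt h2] at h; omega
  · omega

section Main

variable {n t : ℕ} (Q : Fin n → ℕ) (hQ : ∀ i, 2 ≤ Q i) (ht : 3 ≤ t) (part : Fin n → Fin t)

def sym (j : Fin t) (i : Fin n) : Fin (Q i) :=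
  if part i = nxt ht j then ⟨1, by have := hQ i; omega⟩ else ⟨0, by have := hQ i; omega⟩

def core (j : Fin t) : Word Q := fun i =>
  if part i = j then [] else [sym Q hQ ht part j i]

def Matches (f : ∀ i, Fin (Q i)) (j : Fin t) : Prop :=
  ∀ i, part i ≠ j → f i = sym Q hQ ht part j i

def ExtraP (f : ∀ i, Fin (Q i)) : Prop := ∀ j, ¬ Matches Q hQ ht part f j

lemma exists_sep (hsurj : ∀ j : Fin t, ∃ i, part i = j) {j k : Fin t} (hjk : j ≠ k) :
    ∃ i, part i ≠ j ∧ part i ≠ k ∧ sym Q hQ ht part j i ≠ sym Q hQ ht part k i := by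
  by_cases hk : k = nxt ht j
  · obtain ⟨i, hi⟩ := hsurj (nxt ht (nxt ht j))
    refine ⟨i, ?_, ?_, ?_⟩
    · rw [hi]; exact nxt_nxt_ne ht j
    · rw [hi, hk]; exact fun h => nxt_ne ht (nxt ht j) h
    · have h1 : sym Q hQ ht part j i = ⟨0, by have := hQ i; omega⟩ := by
        rw [sym, if_neg]
        rw [hi]
        intro h; exact nxt_ne ht j (nxt_inj ht h)
      have h2 : sym Q hQ ht part k i = ⟨1, by have := hQ i; omega⟩ := by
        rw [sym, if_pos]; rw [hi, hk]
      rw [h1, h2]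
      simp [Fin.ext_iff]
  · obtain ⟨i, hi⟩ := hsurj (nxt ht j)
    refine ⟨i, ?_, ?_, ?_⟩
    · rw [hi]; exact nxt_ne ht j
    · rw [hi]; exact fun h => hk h.symm
    · have h1 : sym Q hQ ht part j i = ⟨1, by have := hQ i; omega⟩ := by
        rw [sym, if_pos hi]
      have h2 : sym Q hQ ht part k i = ⟨0, by have := hQ i; omega⟩ := by
        rw [sym, if_neg]
        rw [hi]
        intro h
        exact hjk (nxt_inj ht h)
      rw [h1, h2]
      simp [Fin.ext_iff]

lemma matches_unique (hsurj : ∀ j : Fin t, ∃ i, part i = j) {f : ∀ i, Fin (Q i)} {j k : Fin t}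
    (hj : Matches Q hQ ht part f j) (hk : Matches Q hQ ht part f k) : j = k := by
  by_contra hjk
  obtain ⟨i, h1, h2, h3⟩ := exists_sep Q hQ ht part hsurj hjk
  exact h3 ((hj i h1).symm.trans (hk i h2))

lemma not_singleton_prefix {α : Type*} {a b : α} (h : a ≠ b) : ¬ ([a] <+: [b]) := by
  rw [List.cons_prefix_cons]
  rintro ⟨rfl, -⟩
  exact h rfl

lemma card_matches (J : Fin t → Finset (Fin n)) (hmem : ∀ i j, i ∈ J j ↔ part i = j)
    (j : Fin t) :
    (Finset.univ.filter (fun f : ∀ i, Fin (Q i) => Matches Q hQ ht part f j)).card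
      = ∏ i ∈ J j, Q i := by
  rw [← Fintype.card_subtype]
  have e : {f : ∀ i, Fin (Q i) // Matches Q hQ ht part f j}
      ≃ (∀ i : (J j : Finset (Fin n)), Fin (Q i.1)) :=
    { toFun := fun f i => f.1 i.1
      invFun := fun g =>
        ⟨fun i => if h : part i = j then g ⟨i, (hmem i j).2 h⟩ else sym Q hQ ht part j i,
         fun i hi => dif_neg hi⟩
      left_inv := by
        intro f
        apply Subtype.ext
        funext i
        by_cases h : part i = j
        · simp only [dif_pos h]
        · simp only [dif_neg h]
          exact (f.2 i h).symm
      right_inv := by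
        intro g
        funext i
        simp only [dif_pos ((hmem i.1 j).1 i.2)] }
  rw [Fintype.card_congr e, Fintype.card_pi]
  rw [← Finset.prod_coe_sort (J j) Q]
  exact Finset.prod_congr rfl fun i _ => Fintype.card_fin _

lemma count_eq (hsurj : ∀ j : Fin t, ∃ i, part i = j) (J : Fin t → Finset (Fin n)) (hmem : ∀ i j, i ∈ J j ↔ part i = j) :
    (∑ j, ∏ i ∈ J j, Q i)
      + (Finset.univ.filter (fun f : ∀ i, Fin (Q i) => ExtraP Q hQ ht part f)).card
      = ∏ i, Q i := by
  classical
  set κ : (∀ i, Fin (Q i)) → Option (Fin t) := fun f =>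
    if h : ∃ j, Matches Q hQ ht part f j then some h.choose else none with hκ
  have hcard := Finset.card_eq_sum_card_fiberwise
    (f := κ) (s := (Finset.univ : Finset (∀ i, Fin (Q i))))
    (t := (Finset.univ : Finset (Option (Fin t)))) (fun x _ => Finset.mem_univ _)
  rw [Finset.card_univ, Fintype.card_pi] at hcard
  simp only [Fintype.card_fin] at hcard
  rw [Fintype.sum_option] at hcard
  have hnone : (Finset.univ.filter (fun f => κ f = none))
      = (Finset.univ.filter (fun f : ∀ i, Fin (Q i) => ExtraP Q hQ ht part f)) := by
    apply Finset.filter_congr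
    intro f _
    simp only [hκ]
    constructor
    · intro h j hj
      by_cases hex : ∃ j, Matches Q hQ ht part f j
      · rw [dif_pos hex] at h; exact absurd h (by simp)
      · exact hex ⟨j, hj⟩
    · intro h
      rw [dif_neg]
      rintro ⟨j, hj⟩
      exact h j hj
  have hsome : ∀ j : Fin t, (Finset.univ.filter (fun f => κ f = some j))
      = (Finset.univ.filter (fun f : ∀ i, Fin (Q i) => Matches Q hQ ht part f j)) := by
    intro j
    apply Finset.filter_congr
    intro f _
    simp only [hκ]
    constructor
    · intro h
      by_cases hex : ∃ j, Matches Q hQ ht part f j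
      · rw [dif_pos hex] at h
        have := hex.choose_spec
        rwa [Option.some_inj.1 h] at this
      · rw [dif_neg hex] at h; exact absurd h (by simp)
    · intro h
      have hex : ∃ k, Matches Q hQ ht part f k := ⟨j, h⟩
      rw [dif_pos hex]
      exact congrArg some (matches_unique Q hQ ht part hsurj hex.choose_spec h)
  rw [hnone] at hcard
  conv at hcard => rw [Finset.sum_congr rfl (fun j _ => by rw [hsome j])]
  rw [hcard]
  rw [Nat.add_comm]
  congr 1
  exact Finset.sum_congr rfl fun j _ => (card_matches Q hQ ht part J hmem j).symm

end Main
end Stmt9Aux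

/-- Main theorem: if `t ≥ 3` and `Q` admits a `t`-separation, then `Q`
is above tree line: there are probabilities on which some prefix code achieves the
entropy bound while every tree-decodable code has strictly larger expected length. -/
theorem stmt9 {n t : ℕ} (hn : 1 ≤ n) (Q : Fin n → ℕ) (hQ : ∀ i, 2 ≤ Q i) (ht : 3 ≤ t)
    (J : Fin t → Finset (Fin n))
    (hdisj : ∀ j k : Fin t, j ≠ k → Disjoint (J j) (J k))
    (hcover : ∀ i : Fin n, ∃ j : Fin t, i ∈ J j)
    (hne : ∀ j : Fin t, (J j).Nonempty)
    (hsep : ∀ j : Fin t, Separated Q (J j)) :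
    ∃ m : ℕ, 1 ≤ m ∧ ∃ p : Fin m → ℝ,
      (∀ j, 0 < p j) ∧ (∑ j, p j) = 1 ∧
      (∃ c : Fin m → Word Q, Function.Injective c ∧
        (∀ j k : Fin m, j ≠ k → PrefixFree (c j) (c k)) ∧
        (∑ j, p j * dlen Q (c j)) = -∑ j, p j * Real.log (p j)) ∧
      (∀ c' : Fin m → Word Q, Function.Injective c' →
        TreeDecodable Q (Finset.univ.image c') →
        (∑ j, p j * dlen Q (c' j)) > -∑ j, p j * Real.log (p j)) := by
  classical
  choose part hpart_mem using hcover
  have hmem : ∀ i j, i ∈ J j ↔ part i = j := by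
    intro i j
    constructor
    · intro hij
      by_contra hne'
      exact Finset.disjoint_left.1 (hdisj (part i) j hne') (hpart_mem i) hij
    · intro h; rw [← h]; exact hpart_mem i
  have hsurj : ∀ j : Fin t, ∃ i, part i = j := by
    intro j
    obtain ⟨i, hi⟩ := hne j
    exact ⟨i, (hmem i j).1 hi⟩
  have hQpos : ∀ i, (0 : ℝ) < Q i := fun i => by
    have := hQ i; exact_mod_cast (by omega : (0:ℕ) < Q i)
  have hNpos : 0 < ∏ i, Q i := Finset.prod_pos fun i _ => by have := hQ i; omega
  have hRpos : ∀ j, 0 < ∏ i ∈ J j, Q i := fun j => Finset.prod_pos fun i _ => by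
    have := hQ i; omega
  have hNCpos : ∀ j : Fin t, 0 < ∏ i ∈ (J j)ᶜ, Q i := fun j => Finset.prod_pos fun i _ => by
    have := hQ i; omega
  have hNsplit : ∀ j : Fin t, (∏ i, Q i) = (∏ i ∈ J j, Q i) * ∏ i ∈ (J j)ᶜ, Q i :=
    fun j => (Finset.prod_mul_prod_compl (J j) Q).symm
  have hcast : ∀ j : Fin t,
      ((∏ i ∈ J j, Q i : ℕ) : ℝ) / ((∏ i, Q i : ℕ) : ℝ)
        = (((∏ i ∈ (J j)ᶜ, Q i : ℕ) : ℝ))⁻¹ := by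
    intro j
    have h1 : (∏ i ∈ J j, (Q i : ℝ)) ≠ 0 := (Finset.prod_pos fun i _ => hQpos i).ne'
    have h2 : (∏ i ∈ (J j)ᶜ, (Q i : ℝ)) ≠ 0 := (Finset.prod_pos fun i _ => hQpos i).ne'
    rw [hNsplit j]
    push_cast
    field_simp
  set E : ℕ :=
    (Finset.univ.filter (fun f : ∀ i, Fin (Q i) => Stmt9Aux.ExtraP Q hQ ht part f)).card with hE
  have hcount : (∑ j, ∏ i ∈ J j, Q i) + E = ∏ i, Q i :=
    Stmt9Aux.count_eq Q hQ ht part hsurj J hmem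
  refine ⟨t + E, by omega, ?_⟩
  have hcardIdx :
      Fintype.card (Fin t ⊕ {f : ∀ i, Fin (Q i) // Stmt9Aux.ExtraP Q hQ ht part f}) = t + E := by
    rw [Fintype.card_sum, Fintype.card_fin, Fintype.card_subtype]
  set G := {f : ∀ i, Fin (Q i) // Stmt9Aux.ExtraP Q hQ ht part f} with hG
  set e : (Fin t ⊕ G) ≃ Fin (t + E) := Fintype.equivFinOfCardEq hcardIdx with he
  set P : (Fin t ⊕ G) → ℝ :=
    Sum.elim (fun j => ((∏ i ∈ J j, Q i : ℕ) : ℝ) / ((∏ i, Q i : ℕ) : ℝ))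
      (fun _ => 1 / ((∏ i, Q i : ℕ) : ℝ)) with hP
  set Wd : (Fin t ⊕ G) → Word Q :=
    Sum.elim (Stmt9Aux.core Q hQ ht part) (fun f => fun i => [f.1 i]) with hWd
  have hppos : ∀ x : Fin t ⊕ G, 0 < P x := by
    intro x
    rcases x with j | f
    · simp only [hP, Sum.elim_inl]
      apply div_pos
      · exact_mod_cast hRpos j
      · exact_mod_cast hNpos
    · simp only [hP, Sum.elim_inr]
      apply div_pos one_pos
      exact_mod_cast hNpos
  have hsum1 : ∑ j : Fin (t + E), P (e.symm j) = 1 := by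
    rw [Equiv.sum_comp e.symm P, Fintype.sum_sum_type]
    simp only [hP, Sum.elim_inl, Sum.elim_inr]
    rw [Finset.sum_const, Finset.card_univ]
    rw [show Fintype.card G = E from Fintype.card_subtype _]
    have hNne : ((∏ i, Q i : ℕ) : ℝ) ≠ 0 := by
      exact_mod_cast hNpos.ne'
    rw [← Finset.sum_div, nsmul_eq_mul, ← Nat.cast_sum, mul_one_div, ← add_div,
      ← Nat.cast_add, hcount, div_self hNne]
  -- descriptive lengths match probabilities
  have hdl : ∀ x : Fin t ⊕ G, dlen Q (Wd x) = - Real.log (P x) := by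
    intro x
    rcases x with j | f
    · simp only [hP, hWd, Sum.elim_inl]
      rw [hcast j, Real.log_inv, neg_neg, dlen]
      have hterm : ∀ i : Fin n,
          ((Stmt9Aux.core Q hQ ht part j i).length : ℝ) * Real.log (Q i)
          = if part i = j then (0:ℝ) else Real.log (Q i) := by
        intro i
        rw [Stmt9Aux.core]
        split <;> simp
      rw [Finset.sum_congr rfl (fun i _ => hterm i), Finset.sum_ite, Finset.sum_const_zero,
        zero_add]
      have hfil : Finset.univ.filter (fun i => ¬ part i = j) = (J j)ᶜ := by
        ext i
        simp [hmem i j]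
      rw [hfil, ← Real.log_prod (fun i _ => (hQpos i).ne')]
      rw [Nat.cast_prod]
    · simp only [hP, hWd, Sum.elim_inr]
      rw [one_div, Real.log_inv, neg_neg, dlen]
      simp only [List.length_singleton]
      rw [Nat.cast_prod, Real.log_prod (fun i _ => (hQpos i).ne')]
      simp
  -- the prefix code
  have hPF : ∀ x y : Fin t ⊕ G, x ≠ y → PrefixFree (Wd x) (Wd y) := by
    have hsingle : ∀ {i : Fin n} {a b : Fin (Q i)}, a ≠ b →
        ¬ ([a] <+: [b]) ∧ ¬ ([b] <+: [a]) := fun h =>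
      ⟨Stmt9Aux.not_singleton_prefix h, Stmt9Aux.not_singleton_prefix (Ne.symm h)⟩
    intro x y hxy
    rcases x with j | f <;> rcases y with k | g
    · have hjk : j ≠ k := fun h => hxy (by rw [h])
      obtain ⟨i, h1, h2, h3⟩ := Stmt9Aux.exists_sep Q hQ ht part hsurj hjk
      refine ⟨i, ?_⟩
      simp only [hWd, Sum.elim_inl, Stmt9Aux.core, if_neg h1, if_neg h2]
      exact hsingle h3
    · have hg := g.2 j
      rw [Stmt9Aux.Matches] at hg
      push_neg at hg
      obtain ⟨i, h1, h2⟩ := hg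
      refine ⟨i, ?_⟩
      simp only [hWd, Sum.elim_inl, Sum.elim_inr, Stmt9Aux.core, if_neg h1]
      exact hsingle (Ne.symm h2)
    · have hg := f.2 k
      rw [Stmt9Aux.Matches] at hg
      push_neg at hg
      obtain ⟨i, h1, h2⟩ := hg
      refine ⟨i, ?_⟩
      simp only [hWd, Sum.elim_inl, Sum.elim_inr, Stmt9Aux.core, if_neg h1]
      exact hsingle h2
    · have hfg : f.1 ≠ g.1 := fun h => hxy (by rw [Sum.inr.injEq]; exact Subtype.ext h)
      obtain ⟨i, hi⟩ := Function.ne_iff.1 hfg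
      refine ⟨i, ?_⟩
      simp only [hWd, Sum.elim_inr]
      exact hsingle hi
  refine ⟨fun j => P (e.symm j), fun j => hppos _, hsum1, ?_, ?_⟩
  · -- existence of entropy-achieving prefix code
    refine ⟨fun j => Wd (e.symm j), ?_, ?_, ?_⟩
    · intro j k hjk
      by_contra hne'
      have hjk' : Wd (e.symm j) = Wd (e.symm k) := hjk
      obtain ⟨i, hi1, -⟩ := hPF (e.symm j) (e.symm k) (fun h => hne' (e.symm.injective h))
      rw [hjk'] at hi1
      exact hi1 (List.prefix_refl _)
    · intro j k hjk
      exact hPF (e.symm j) (e.symm k) (fun h => hjk (e.symm.injective h))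
    · calc ∑ j : Fin (t + E), P (e.symm j) * dlen Q (Wd (e.symm j))
          = ∑ j : Fin (t + E), -(P (e.symm j) * Real.log (P (e.symm j))) :=
            Finset.sum_congr rfl fun j _ => by rw [hdl]; ring
        _ = -∑ j : Fin (t + E), P (e.symm j) * Real.log (P (e.symm j)) := by
            rw [Finset.sum_neg_distrib]
  · -- tree-decodable codes are strictly worse
    intro c' hc'inj hTD
    set v : Fin (t + E) → ℝ := fun j => (∏ i, ((Q i : ℝ)) ^ (c' j i).length)⁻¹ with hv
    have hvpos : ∀ j, 0 < v j := fun j =>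
      inv_pos.2 (Finset.prod_pos fun i _ => pow_pos (hQpos i) _)
    have hdlen' : ∀ j, dlen Q (c' j) = - Real.log (v j) := by
      intro j
      rw [hv]
      simp only []
      rw [Real.log_inv, neg_neg, Real.log_prod (fun i _ => (pow_pos (hQpos i) _).ne'), dlen]
      exact Finset.sum_congr rfl fun i _ => (Real.log_pow _ _).symm
    have hkraft : ∑ j, v j ≤ 1 := by
      have h1 := Stmt9Aux.kraft hTD
      rwa [Finset.sum_image (fun x _ y _ h => hc'inj h)] at h1
    set q : Fin (t + E) → ℝ := fun j => P (e.symm j) with hq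
    have hqpos : ∀ j, 0 < q j := fun j => hppos _
    have hqsum : ∑ j, q j = 1 := hsum1
    have key : 0 < ∑ j, q j * Real.log (q j / v j) := by
      by_cases hall : ∀ j, v j = q j
      · exfalso
        have hcardC : (Finset.univ.image c').card = t + E := by
          rw [Finset.card_image_of_injective _ hc'inj, Finset.card_univ, Fintype.card_fin]
        obtain ⟨i, hroot⟩ := Stmt9Aux.exists_root hTD (by rw [hcardC]; omega)
        set x := e (Sum.inl (part i)) with hx
        have hq_x : q x = ((∏ i' ∈ J (part i), Q i' : ℕ) : ℝ) / ((∏ i', Q i' : ℕ) : ℝ) := by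
          rw [hq]
          simp only [hx, Equiv.symm_apply_apply, hP, Sum.elim_inl]
        have hval : v x = (((∏ i' ∈ (J (part i))ᶜ, Q i' : ℕ) : ℝ))⁻¹ := by
          rw [hall x, hq_x, hcast]
        have hprod : (∏ i', (Q i' : ℝ) ^ (c' x i').length)
            = ((∏ i' ∈ (J (part i))ᶜ, Q i' : ℕ) : ℝ) := by
          rw [hv] at hval
          simp only [] at hval
          exact inv_injective hval
        have hnat : (∏ i', Q i' ^ (c' x i').length) = ∏ i' ∈ (J (part i))ᶜ, Q i' := by
          exact_mod_cast hprod
        have hzero := hsep (part i) (fun i' => (c' x i').length) hnat i (hpart_mem i)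
        have hxne : c' x i ≠ [] :=
          hroot (c' x) (Finset.mem_image_of_mem c' (Finset.mem_univ x))
        exact hxne (List.length_eq_zero_iff.1 hzero)
      · push_neg at hall
        obtain ⟨j0, hj0⟩ := hall
        have hqv : ∀ j : Fin (t + E), q j * (v j / q j - 1) = v j - q j := by
          intro j
          have h3 : q j * (v j / q j) = v j := by
            rw [mul_comm, div_mul_cancel₀ _ (hqpos j).ne']
          rw [mul_sub, h3, mul_one]
        have hstrict : ∑ j, q j * Real.log (v j / q j) < ∑ j, (v j - q j) := by
          apply Finset.sum_lt_sum
          · intro j _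
            have h1 : Real.log (v j / q j) ≤ v j / q j - 1 :=
              Real.log_le_sub_one_of_pos (div_pos (hvpos j) (hqpos j))
            have h2 := mul_le_mul_of_nonneg_left h1 (hqpos j).le
            rw [hqv j] at h2
            exact h2
          · refine ⟨j0, Finset.mem_univ j0, ?_⟩
            have hne1 : v j0 / q j0 ≠ 1 := fun h =>
              hj0 ((div_eq_one_iff_eq (hqpos j0).ne').1 h)
            have h1 : Real.log (v j0 / q j0) < v j0 / q j0 - 1 :=
              Real.log_lt_sub_one_of_pos (div_pos (hvpos j0) (hqpos j0)) hne1
            have h2 := mul_lt_mul_of_pos_left h1 (hqpos j0)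
            rw [hqv j0] at h2
            exact h2
        have hsub : ∑ j, (v j - q j) ≤ 0 := by
          rw [Finset.sum_sub_distrib, hqsum]
          linarith [hkraft]
        have hneg : ∑ j, q j * Real.log (v j / q j) < 0 := lt_of_lt_of_le hstrict hsub
        have hflip : ∑ j, q j * Real.log (q j / v j)
            = - ∑ j, q j * Real.log (v j / q j) := by
          rw [← Finset.sum_neg_distrib]
          exact Finset.sum_congr rfl fun j _ => by
            rw [Real.log_div (hqpos j).ne' (hvpos j).ne',
              Real.log_div (hvpos j).ne' (hqpos j).ne']
            ring
        rw [hflip]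
        linarith
    have hfin : (∑ j, q j * dlen Q (c' j)) + ∑ j, q j * Real.log (q j)
        = ∑ j, q j * Real.log (q j / v j) := by
      rw [← Finset.sum_add_distrib]
      exact Finset.sum_congr rfl fun j _ => by
        rw [hdlen' j, Real.log_div (hqpos j).ne' (hvpos j).ne']
        ring
    linarith [key, hfin]
end

section
/- Let t ≥ 3, let {J_0,…,J_{t−1}} be a t-separation of Q, let Q^× = (q^×_0,…,q^×_{t−1}) where q^×_j = ∏_{i∈J_j} q_i, and let P be the Q^×-ary selvage probability assembly. Then no Q-ary tree-decodable code on P achieves the entropy bound: for every injective assignment of Q-ary words c_j to the probabilities p_j of P whose image is a tree-decodable set, Σ_j p_j·|c_j| ≠ −Σ_j p_j·ln p_j. -/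
open scoped Classical

noncomputable def weight {n : ℕ} (Q : Fin n → ℕ) (w : Word Q) : ℝ :=
  ∏ i, ((Q i : ℝ))⁻¹ ^ (w i).length

lemma weight_pos {n : ℕ} {Q : Fin n → ℕ} (hQ : ∀ i, 2 ≤ Q i) (w : Word Q) :
    0 < weight Q w := by
  apply Finset.prod_pos
  intro i _
  have : (0:ℝ) < (Q i : ℝ) := by exact_mod_cast Nat.lt_of_lt_of_le Nat.zero_lt_two (hQ i)
  positivity

lemma weight_update {n : ℕ} {Q : Fin n → ℕ} (hQ : ∀ i, 2 ≤ Q i) (w : Word Q) (i : Fin n)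
    (hwi : w i ≠ []) :
    weight Q w = ((Q i : ℝ))⁻¹ * weight Q (Function.update w i (w i).tail) := by
  unfold weight
  rw [← Finset.mul_prod_erase Finset.univ _ (Finset.mem_univ i),
    ← Finset.mul_prod_erase Finset.univ
      (fun k => ((Q k : ℝ))⁻¹ ^ ((Function.update w i (w i).tail k).length)) (Finset.mem_univ i)]
  have h1 : (Finset.univ.erase i).prod (fun k => ((Q k : ℝ))⁻¹ ^ (w k).length)
      = (Finset.univ.erase i).prod
        (fun k => ((Q k : ℝ))⁻¹ ^ ((Function.update w i (w i).tail k).length)) := by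
    apply Finset.prod_congr rfl
    intro k hk
    rw [Function.update_of_ne (Finset.ne_of_mem_erase hk)]
  rw [← h1, Function.update_self, ← mul_assoc]
  congr 1
  rw [List.length_tail]
  have hlen : 1 ≤ (w i).length := List.length_pos_iff.mpr hwi
  conv_lhs => rw [show (w i).length = (w i).length - 1 + 1 from by omega]
  rw [pow_succ']

lemma kraft {n : ℕ} {Q : Fin n → ℕ} (hQ : ∀ i, 2 ≤ Q i) {C : Finset (Word Q)}
    (h : TreeDecodable Q C) : ∑ w ∈ C, weight Q w ≤ 1 := by
  induction h with
  | empty => simp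
  | single => simp [weight]
  | node C i hne h ih =>
    have hQi : (0:ℝ) < (Q i : ℝ) := by exact_mod_cast Nat.lt_of_lt_of_le Nat.zero_lt_two (hQ i)
    have hzero : 0 < Q i := by have := hQ i; omega
    set g : Word Q → Fin (Q i) := fun w => ((w i).head?).getD ⟨0, hzero⟩ with hg
    have hmaps : ∀ w ∈ C, g w ∈ (Finset.univ : Finset (Fin (Q i))) := fun _ _ => Finset.mem_univ _
    rw [← Finset.sum_fiberwise_of_maps_to hmaps]
    have key : ∀ a : Fin (Q i),
        ∑ w ∈ C.filter (fun w => g w = a), weight Q w ≤ ((Q i : ℝ))⁻¹ := by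
      intro a
      have hfil : C.filter (fun w => g w = a) = C.filter (fun w => (w i).head? = some a) := by
        apply Finset.filter_congr
        intro w hw
        have hwne := hne w hw
        obtain ⟨b, hb⟩ : ∃ b, (w i).head? = some b := by
          cases hd : (w i) with
          | nil => exact absurd hd hwne
          | cons x xs => exact ⟨x, by simp [hd]⟩
        simp [hg, hb]
      rw [hfil]
      have hinj : Set.InjOn (fun c : Word Q => Function.update c i (c i).tail)
          (C.filter (fun w => (w i).head? = some a)) := by
        intro x hx y hy hxy
        simp only [Finset.coe_filter, Set.mem_setOf_eq] at hx hy
        funext k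
        by_cases hk : k = i
        · subst hk
          obtain ⟨xs, hxs⟩ := List.head?_eq_some_iff.mp hx.2
          obtain ⟨ys, hys⟩ := List.head?_eq_some_iff.mp hy.2
          have := congrFun hxy k
          simp only [Function.update_self] at this
          rw [hxs, hys]
          simp only [hxs, hys, List.tail_cons] at this
          rw [this]
        · have := congrFun hxy k
          simpa [Function.update_of_ne hk] using this
      have himg : ∑ v ∈ child C i a, weight Q v
          = ∑ w ∈ C.filter (fun w => (w i).head? = some a),
              weight Q (Function.update w i (w i).tail) := by
        unfold child
        rw [Finset.sum_image]
        intro x hx y hy hxy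
        exact hinj (by simpa using hx) (by simpa using hy) hxy
      have hsum : ∑ w ∈ C.filter (fun w => (w i).head? = some a), weight Q w
          = ((Q i : ℝ))⁻¹ * ∑ v ∈ child C i a, weight Q v := by
        rw [himg, Finset.mul_sum]
        apply Finset.sum_congr rfl
        intro w hw
        simp only [Finset.mem_filter] at hw
        exact weight_update hQ w i (hne w hw.1)
      rw [hsum]
      calc ((Q i : ℝ))⁻¹ * ∑ v ∈ child C i a, weight Q v
          ≤ ((Q i : ℝ))⁻¹ * 1 := by
            apply mul_le_mul_of_nonneg_left (ih a)
            positivity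
        _ = ((Q i : ℝ))⁻¹ := mul_one _
    calc ∑ a : Fin (Q i), ∑ w ∈ C.filter (fun w => g w = a), weight Q w
        ≤ ∑ _a : Fin (Q i), ((Q i : ℝ))⁻¹ := Finset.sum_le_sum (fun a _ => key a)
      _ = 1 := by
          rw [Finset.sum_const, Finset.card_univ, Fintype.card_fin, nsmul_eq_mul]
          field_simp


lemma nat_sum_le_prod {ι : Type*} (s : Finset ι) (f : ι → ℕ) (hf : ∀ i ∈ s, 2 ≤ f i) :
    ∑ i ∈ s, f i ≤ ∏ i ∈ s, f i := by
  classical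
  induction s using Finset.induction with
  | empty => simp
  | @insert a s hnotmem ih =>
    rw [Finset.sum_insert hnotmem, Finset.prod_insert hnotmem]
    have ha : 2 ≤ f a := hf a (Finset.mem_insert_self a s)
    have ih' := ih (fun i hi => hf i (Finset.mem_insert_of_mem hi))
    rcases Finset.eq_empty_or_nonempty s with rfl | hs
    · simp
    · have hP : 2 ≤ ∏ i ∈ s, f i := by
        obtain ⟨b, hb⟩ := hs
        calc 2 ≤ f b := hf b (Finset.mem_insert_of_mem hb)
          _ ≤ ∏ i ∈ s, f i :=
            Finset.single_le_prod' (fun i hi => by have := hf i (Finset.mem_insert_of_mem hi); omega) hb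
      nlinarith

lemma dlen_eq_neg_log_weight {n : ℕ} {Q : Fin n → ℕ} (hQ : ∀ i, 2 ≤ Q i) (c : Word Q) :
    dlen Q c = -Real.log (weight Q c) := by
  unfold dlen weight
  rw [Real.log_prod]
  · rw [← Finset.sum_neg_distrib]
    apply Finset.sum_congr rfl
    intro i _
    rw [Real.log_pow, Real.log_inv]
    ring
  · intro i _
    have : (0:ℝ) < (Q i : ℝ) := by exact_mod_cast Nat.lt_of_lt_of_le Nat.zero_lt_two (hQ i)
    positivity

/-- if `{J_j}` is a `t`-separation of `Q` (`t ≥ 3`) and `P` is the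
`Q^×`-ary selvage probability assembly where `q^×_j = ∏_{i ∈ J_j} q_i`, then no `Q`-ary
tree-decodable code on `P` achieves the entropy bound. -/
theorem stmt10 {n t : ℕ} (hn : 1 ≤ n) (Q : Fin n → ℕ) (hQ : ∀ i, 2 ≤ Q i) (ht : 3 ≤ t)
    (J : Fin t → Finset (Fin n))
    (hdisj : ∀ j k : Fin t, j ≠ k → Disjoint (J j) (J k))
    (hcover : ∀ i : Fin n, ∃ j : Fin t, i ∈ J j)
    (hne : ∀ j : Fin t, (J j).Nonempty)
    (hsep : ∀ j : Fin t, Separated Q (J j))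
    (Qx : Fin t → ℕ) (hQx : ∀ j, Qx j = ∏ i ∈ J j, Q i) :
    ∀ c : Fin (t + ((∏ j, Qx j) - (∑ j, Qx j))) → Word Q,
      Function.Injective c →
      TreeDecodable Q (Finset.univ.image c) →
      (∑ j, spa Qx j * dlen Q (c j)) ≠ -∑ j, spa Qx j * Real.log (spa Qx j) := by
  set K : ℕ := (∏ j, Qx j) - (∑ j, Qx j) with hK
  intro c hinj htd heq
  -- basic positivity facts
  have hQx2 : ∀ j, 2 ≤ Qx j := by
    intro j
    obtain ⟨i0, hi0⟩ := hne j
    have h1 : Q i0 ≤ ∏ i ∈ J j, Q i :=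
      Finset.single_le_prod' (fun i _ => by have := hQ i; omega) hi0
    have := hQ i0
    rw [hQx j]; omega
  have hN : 0 < ∏ j, Qx j := Finset.prod_pos (fun j _ => by have := hQx2 j; omega)
  have hNR : (0:ℝ) < (∏ j, Qx j : ℕ) := by exact_mod_cast hN
  have hSN : (∑ j, Qx j) ≤ ∏ j, Qx j :=
    nat_sum_le_prod Finset.univ Qx (fun j _ => hQx2 j)
  set p : Fin (t + K) → ℝ := spa Qx with hpdef
  set w : Fin (t + K) → ℝ := fun j => weight Q (c j) with hwdef
  have hspa_lt : ∀ j : Fin (t + K), ∀ hj : (j : ℕ) < t, p j = (Qx ⟨j, hj⟩ : ℝ) / (∏ i, Qx i) := by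
    intro j hj
    simp only [hpdef, spa, dif_pos hj]
  have hspa_ge : ∀ j : Fin (t + K), t ≤ (j : ℕ) → p j = 1 / (∏ i, Qx i) := by
    intro j hj
    simp only [hpdef, spa, dif_neg (by omega : ¬ (j:ℕ) < t)]
  have hp : ∀ j, 0 < p j := by
    intro j
    by_cases hj : (j : ℕ) < t
    · rw [hspa_lt j hj]
      have := hQx2 ⟨j, by omega⟩
      apply div_pos (by exact_mod_cast (by omega : 0 < Qx ⟨(j:ℕ), by omega⟩)) hNR
    · rw [hspa_ge j (by omega)]
      positivity
  have hw : ∀ j, 0 < w j := fun j => weight_pos hQ (c j)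
  -- sum of probabilities is 1
  have hsum_p : ∑ j, p j = 1 := by
    rw [Fin.sum_univ_add (f := p)]
    have e1 : ∀ j : Fin t, p (Fin.castAdd K j) = (Qx j : ℝ) / (∏ i, Qx i) := by
      intro j
      rw [hspa_lt (Fin.castAdd K j) (by simp)]
      have hcast : (⟨((Fin.castAdd K j : Fin (t + K)) : ℕ), by simp⟩ : Fin t) = j :=
        Fin.ext (by simp)
      rw [hcast]
    have e2 : ∀ j : Fin K, p (Fin.natAdd t j) = 1 / (∏ i, Qx i) := by
      intro j
      rw [hspa_ge (Fin.natAdd t j) (by simp [Fin.natAdd])]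
    rw [Finset.sum_congr rfl (fun j _ => e1 j), Finset.sum_congr rfl (fun j _ => e2 j)]
    rw [← Finset.sum_div, Finset.sum_const, Finset.card_univ, Fintype.card_fin,
      nsmul_eq_mul, mul_one_div]
    have hKcast : (K : ℝ) = (∏ j, Qx j : ℕ) - (∑ j, Qx j : ℕ) := by
      rw [hK, Nat.cast_sub hSN]
    rw [← add_div, hKcast]
    push_cast
    have hNR' : (0:ℝ) < ∏ i : Fin t, (Qx i : ℝ) := by push_cast at hNR; exact hNR
    field_simp
    ring
  -- Kraft inequality
  have hsum_w : ∑ j, w j ≤ 1 := by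
    have hk := kraft hQ htd
    rwa [Finset.sum_image (fun x _ y _ h => hinj h)] at hk
  -- from the entropy equality derive that each weight equals each probability
  have hS : ∑ j, p j * (Real.log (w j) - Real.log (p j)) = 0 := by
    have heq' := heq
    simp only [dlen_eq_neg_log_weight hQ, mul_neg] at heq'
    rw [Finset.sum_neg_distrib] at heq'
    simp only [mul_sub, Finset.sum_sub_distrib]
    have : ∑ j, p j * Real.log (w j) = ∑ j, p j * Real.log (p j) := by
      have := heq'
      simp only [hpdef, hwdef] at *
      linarith
    linarith [this]
  have hterm : ∀ j, p j * (Real.log (w j) - Real.log (p j)) ≤ w j - p j := by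
    intro j
    have hlog := Real.log_le_sub_one_of_pos (div_pos (hw j) (hp j))
    rw [Real.log_div (hw j).ne' (hp j).ne'] at hlog
    have h2 : p j * (w j / p j - 1) = w j - p j := by rw [mul_sub, mul_one, mul_div_cancel₀ _ (hp j).ne']
    calc p j * (Real.log (w j) - Real.log (p j))
        ≤ p j * (w j / p j - 1) := mul_le_mul_of_nonneg_left hlog (hp j).le
      _ = w j - p j := h2
  have hsub : ∑ j, (w j - p j) ≤ 0 := by
    rw [Finset.sum_sub_distrib, hsum_p]
    linarith
  have hwp : ∀ j, w j = p j := by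
    intro j0
    by_contra hne0
    have hstrict : p j0 * (Real.log (w j0) - Real.log (p j0)) < w j0 - p j0 := by
      have hne1 : w j0 / p j0 ≠ 1 :=
        fun h => hne0 ((div_eq_one_iff_eq (hp j0).ne').mp h)
      have hlog := Real.log_lt_sub_one_of_pos (div_pos (hw j0) (hp j0)) hne1
      rw [Real.log_div (hw j0).ne' (hp j0).ne'] at hlog
      have h2 : p j0 * (w j0 / p j0 - 1) = w j0 - p j0 := by rw [mul_sub, mul_one, mul_div_cancel₀ _ (hp j0).ne']
      calc p j0 * (Real.log (w j0) - Real.log (p j0))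
          < p j0 * (w j0 / p j0 - 1) := by
            apply (mul_lt_mul_iff_right₀ (hp j0)).mpr hlog
        _ = w j0 - p j0 := h2
    have hlt : ∑ j, p j * (Real.log (w j) - Real.log (p j)) < ∑ j, (w j - p j) :=
      Finset.sum_lt_sum (fun j _ => hterm j) ⟨j0, Finset.mem_univ j0, hstrict⟩
    linarith
  -- complement product identity
  have hpartition : ∀ k : Fin t, (J k)ᶜ = (Finset.univ.erase k).biUnion J := by
    intro k
    ext i
    simp only [Finset.mem_compl, Finset.mem_biUnion, Finset.mem_erase, Finset.mem_univ,
      and_true]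
    constructor
    · intro hik
      obtain ⟨j, hj⟩ := hcover i
      exact ⟨j, fun h => hik (h ▸ hj), hj⟩
    · rintro ⟨j, hjk, hj⟩ hik
      exact (Finset.disjoint_left.mp (hdisj j k hjk) hj) hik
  have hprod_compl : ∀ k : Fin t, ∏ i ∈ (J k)ᶜ, Q i = ∏ j ∈ Finset.univ.erase k, Qx j := by
    intro k
    rw [hpartition k, Finset.prod_biUnion]
    · exact Finset.prod_congr rfl (fun j _ => (hQx j).symm)
    · intro a ha b hb hab
      exact hdisj a b hab
  -- for each k < t, the codeword components on J k are empty
  have hempty : ∀ k : Fin t, ∀ i ∈ J k, c (Fin.castAdd K k) i = [] := by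
    intro k i hik
    have hjk : ((Fin.castAdd K k : Fin (t + K)) : ℕ) < t := by simp [Fin.castAdd]
    have hwpk := hwp (Fin.castAdd K k)
    rw [hspa_lt _ hjk] at hwpk
    have hcast : (⟨((Fin.castAdd K k : Fin (t + K)) : ℕ), by omega⟩ : Fin t) = k := by
      apply Fin.ext; simp [Fin.castAdd]
    rw [hcast] at hwpk
    -- weight as inverse of a product of naturals
    set x : Fin n → ℕ := fun i => ((c (Fin.castAdd K k)) i).length with hx
    have hwinv : w (Fin.castAdd K k) = ((∏ i, Q i ^ x i : ℕ) : ℝ)⁻¹ := by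
      simp only [hwdef, weight]
      push_cast
      rw [← Finset.prod_inv_distrib]
      exact Finset.prod_congr rfl (fun i _ => by rw [inv_pow])
    have hQxk : (0:ℝ) < (Qx k : ℝ) := by exact_mod_cast (by have := hQx2 k; omega : 0 < Qx k)
    have hXpos : (0:ℝ) < ((∏ i, Q i ^ x i : ℕ) : ℝ) := by
      have : 0 < ∏ i, Q i ^ x i :=
        Finset.prod_pos (fun i _ => pow_pos (by have := hQ i; omega) _)
      exact_mod_cast this
    have hNsplit : (∏ j, Qx j) = Qx k * ∏ j ∈ Finset.univ.erase k, Qx j :=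
      (Finset.mul_prod_erase Finset.univ Qx (Finset.mem_univ k)).symm
    have hreal : ((∏ i, Q i ^ x i : ℕ) : ℝ) = ((∏ j ∈ Finset.univ.erase k, Qx j : ℕ) : ℝ) := by
      rw [hwinv] at hwpk
      have h3 : ((∏ i, Q i ^ x i : ℕ) : ℝ) = (∏ j, Qx j : ℕ) / (Qx k : ℝ) := by
        rw [inv_eq_iff_eq_inv] at hwpk
        rw [hwpk, inv_div]
      rw [h3, hNsplit]
      push_cast
      field_simp
    have hnat : (∏ i, Q i ^ x i) = ∏ j ∈ Finset.univ.erase k, Qx j := by exact_mod_cast hreal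
    have hsepk := hsep k x (by rw [hnat, hprod_compl k])
    have := hsepk i hik
    rwa [hx, List.length_eq_zero_iff] at this
  -- now analyze the tree structure
  have hcard : (Finset.univ.image c).card = t + K := by
    rw [Finset.card_image_of_injective _ hinj, Finset.card_univ, Fintype.card_fin]
  generalize hC : Finset.univ.image c = C at htd
  rw [hC] at hcard
  cases htd with
  | empty =>
    simp at hcard
    omega
  | single =>
    simp at hcard
    omega
  | node C i hne' hch =>
    obtain ⟨k, hik⟩ := hcover i
    have hmem : c (Fin.castAdd K k) ∈ C := by
      rw [← hC]
      exact Finset.mem_image_of_mem c (Finset.mem_univ _)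
    exact hne' _ hmem (hempty k i hik)
end

section
/- Let t ≥ 3, let {J_0,…,J_{t−1}} be any partition of {0,…,n−1}, let Q^× = (q^×_0,…,q^×_{t−1}) where q^×_j = ∏_{i∈J_j} q_i, and let P be the Q^×-ary selvage probability assembly. Then there exists a Q-ary prefix code on P achieving the entropy bound: an injective assignment of pairwise prefix-free Q-ary words c_j to the probabilities p_j of P with |c_j| = −ln p_j for every j, hence Σ_j p_j·|c_j| = −Σ_j p_j·ln p_j. -/
open scoped Classical

section Aux

variable {n t : ℕ} (Q : Fin n → ℕ) (hQ : ∀ i, 2 ≤ Q i) (ht : 3 ≤ t)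
  (J : Fin t → Finset (Fin n)) (hcover : ∀ i : Fin n, ∃ j : Fin t, i ∈ J j)

/-- the part containing channel `i` -/
noncomputable def myPart : Fin n → Fin t := fun i => (hcover i).choose

lemma myPart_mem (i : Fin n) : i ∈ J (myPart J hcover i) := (hcover i).choose_spec

/-- successor mod t -/
def mySucc : Fin t → Fin t := fun j => ⟨((j : ℕ) + 1) % t, Nat.mod_lt _ (by omega)⟩

lemma mySucc_val (j : Fin t) :
    (mySucc ht j : ℕ) = if (j : ℕ) + 1 = t then 0 else (j : ℕ) + 1 := by
  have hj := j.isLt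
  by_cases h : (j : ℕ) + 1 = t
  · simp [mySucc, h, Nat.mod_self]
  · have hlt : (j : ℕ) + 1 < t := by omega
    simp [mySucc, h, Nat.mod_eq_of_lt hlt]

lemma mySucc_ne (j : Fin t) : mySucc ht j ≠ j := by
  have := mySucc_val ht j
  intro h; rw [h] at this
  split at this <;> omega

lemma mySucc_inj {j k : Fin t} (h : mySucc ht j = mySucc ht k) : j = k := by
  have hj := mySucc_val ht j
  have hk := mySucc_val ht k
  have : (mySucc ht j : ℕ) = (mySucc ht k : ℕ) := by rw [h]
  have hj' := j.isLt; have hk' := k.isLt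
  apply Fin.ext
  split at hj <;> split at hk <;> omega

lemma mySucc_succ_ne (j : Fin t) : mySucc ht (mySucc ht j) ≠ j := by
  have h1 := mySucc_val ht j
  have h2 := mySucc_val ht (mySucc ht j)
  intro h; rw [h] at h2
  have hj' := j.isLt
  split at h1 <;> split at h2 <;> omega

noncomputable def mySym : Fin t → (i : Fin n) → Fin (Q i) :=
  fun j i => if myPart J hcover i = mySucc ht j
    then ⟨1, by have := hQ i; omega⟩ else ⟨0, by have := hQ i; omega⟩

noncomputable def myCore : Fin t → Word Q :=
  fun j i => if myPart J hcover i = j then [] else [mySym Q hQ ht J hcover j i]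

/-- key separation lemma -/
lemma key_sep {j k : Fin t} (hjk : j ≠ k) :
    ∃ m : Fin t, m ≠ j ∧ m ≠ k ∧
      ∀ i : Fin n, myPart J hcover i = m →
        mySym Q hQ ht J hcover j i ≠ mySym Q hQ ht J hcover k i := by
  by_cases h : mySucc ht j = k
  · refine ⟨mySucc ht k, ?_, mySucc_ne ht k, ?_⟩
    · rw [← h]; exact mySucc_succ_ne ht j
    · intro i hi
      have h1 : mySym Q hQ ht J hcover j i = ⟨0, by have := hQ i; omega⟩ := by
        have : myPart J hcover i ≠ mySucc ht j := by
          rw [hi, h]; intro hh; exact (mySucc_ne ht k) hh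
        simp [mySym, this]
      have h2 : mySym Q hQ ht J hcover k i = ⟨1, by have := hQ i; omega⟩ := by
        simp [mySym, hi]
      rw [h1, h2]; intro hh
      have := congrArg Fin.val hh; simp at this
  · refine ⟨mySucc ht j, mySucc_ne ht j, h, ?_⟩
    intro i hi
    have h1 : mySym Q hQ ht J hcover j i = ⟨1, by have := hQ i; omega⟩ := by
      simp [mySym, hi]
    have h2 : mySym Q hQ ht J hcover k i = ⟨0, by have := hQ i; omega⟩ := by
      have : myPart J hcover i ≠ mySucc ht k := by
        rw [hi]; intro hh; exact hjk (mySucc_inj ht hh)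
      simp [mySym, this]
    rw [h1, h2]; intro hh
    have := congrArg Fin.val hh; simp at this


lemma myPart_eq (hdisj : ∀ j k : Fin t, j ≠ k → Disjoint (J j) (J k))
    {i : Fin n} {j : Fin t} (h : i ∈ J j) : myPart J hcover i = j := by
  by_contra hc
  exact (Finset.disjoint_left.mp (hdisj _ _ hc) (myPart_mem J hcover i)) h

lemma myPart_ne (hdisj : ∀ j k : Fin t, j ≠ k → Disjoint (J j) (J k))
    {i : Fin n} {j : Fin t} (h : i ∉ J j) : myPart J hcover i ≠ j := by
  intro hc; exact h (hc ▸ myPart_mem J hcover i)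

lemma singleton_not_prefix {α : Type*} {a b : α} (h : a ≠ b) : ¬([a] <+: [b]) := by
  intro ⟨s, hs⟩
  simp only [List.singleton_append, List.cons.injEq] at hs
  exact h hs.1

noncomputable def myBad (j : Fin t) : Finset ((i : Fin n) → Fin (Q i)) :=
  Finset.univ.filter
    (fun f => ∀ i, myPart J hcover i ≠ j → f i = mySym Q hQ ht J hcover j i)

noncomputable def myGood : Finset ((i : Fin n) → Fin (Q i)) :=
  Finset.univ.filter
    (fun f => ∀ j, ∃ i, myPart J hcover i ≠ j ∧ f i ≠ mySym Q hQ ht J hcover j i)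

lemma card_myBad (hdisj : ∀ j k : Fin t, j ≠ k → Disjoint (J j) (J k)) (j : Fin t) :
    (myBad Q hQ ht J hcover j).card = ∏ i ∈ J j, Q i := by
  classical
  have himg : (myBad Q hQ ht J hcover j) =
      Finset.image (fun g : (i : {x // x ∈ J j}) → Fin (Q i) =>
        (fun i => if h : i ∈ J j then g ⟨i, h⟩ else mySym Q hQ ht J hcover j i))
        Finset.univ := by
    ext f
    simp only [myBad, Finset.mem_filter, Finset.mem_univ, true_and, Finset.mem_image]
    constructor
    · intro hf
      refine ⟨fun i => f i, ?_⟩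
      funext i
      by_cases h : i ∈ J j
      · simp [h]
      · simp only [h, dif_neg, not_false_iff]
        exact (hf i (myPart_ne J hcover hdisj h)).symm
    · rintro ⟨g, rfl⟩ i hi
      have h : i ∉ J j := fun hh => hi (myPart_eq J hcover hdisj hh)
      simp [h]
  rw [himg, Finset.card_image_of_injective _ ?_, Finset.card_univ, Fintype.card_pi]
  · rw [← Finset.prod_coe_sort (J j) (fun i => Q i)]
    simp
  · intro g g' hgg
    funext i
    have := congrFun hgg i.1
    simpa [i.2] using this

lemma myBad_disjoint (hdisj : ∀ j k : Fin t, j ≠ k → Disjoint (J j) (J k))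
    (hnon : ∀ j : Fin t, (J j).Nonempty) {j k : Fin t} (hjk : j ≠ k) :
    Disjoint (myBad Q hQ ht J hcover j) (myBad Q hQ ht J hcover k) := by
  classical
  rw [Finset.disjoint_left]
  intro f hfj hfk
  simp only [myBad, Finset.mem_filter, Finset.mem_univ, true_and] at hfj hfk
  obtain ⟨m, hmj, hmk, hsym⟩ := key_sep Q hQ ht J hcover hjk
  obtain ⟨i, hi⟩ := hnon m
  have hpi : myPart J hcover i = m := myPart_eq J hcover hdisj hi
  have h1 := hfj i (by rw [hpi]; exact hmj)
  have h2 := hfk i (by rw [hpi]; exact hmk)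
  exact hsym i hpi (h1 ▸ h2 ▸ rfl)

lemma card_myGood (hdisj : ∀ j k : Fin t, j ≠ k → Disjoint (J j) (J k))
    (hnon : ∀ j : Fin t, (J j).Nonempty) :
    (myGood Q hQ ht J hcover).card = (∏ i, Q i) - ∑ j : Fin t, ∏ i ∈ J j, Q i := by
  classical
  have hcompl : myGood Q hQ ht J hcover =
      (Finset.univ.biUnion (fun j => myBad Q hQ ht J hcover j))ᶜ := by
    ext f
    simp only [myGood, myBad, Finset.mem_filter, Finset.mem_univ, true_and,
      Finset.mem_compl, Finset.mem_biUnion]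
    push_neg
    tauto
  rw [hcompl, Finset.card_compl,
    Finset.card_biUnion (fun j _ k _ hjk => myBad_disjoint Q hQ ht J hcover hdisj hnon hjk)]
  congr 1
  · rw [Fintype.card_pi]; simp
  · exact Finset.sum_congr rfl fun j _ => card_myBad Q hQ ht J hcover hdisj j

lemma prod_parts (hcov : ∀ i : Fin n, ∃ j : Fin t, i ∈ J j)
    (hdisj : ∀ j k : Fin t, j ≠ k → Disjoint (J j) (J k)) :
    ∏ j : Fin t, ∏ i ∈ J j, Q i = ∏ i, Q i := by
  classical
  have huniv : Finset.univ.biUnion J = Finset.univ := by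
    apply Finset.eq_univ_iff_forall.mpr
    intro i
    simp only [Finset.mem_biUnion, Finset.mem_univ, true_and]
    exact ⟨myPart J hcov i, myPart_mem J hcov i⟩
  rw [← huniv, Finset.prod_biUnion (fun j _ k _ hjk => hdisj j k hjk)]


lemma core_prefixFree (hdisj : ∀ j k : Fin t, j ≠ k → Disjoint (J j) (J k))
    (hnon : ∀ j : Fin t, (J j).Nonempty) {j k : Fin t} (hjk : j ≠ k) :
    PrefixFree (myCore Q hQ ht J hcover j) (myCore Q hQ ht J hcover k) := by
  obtain ⟨m, hmj, hmk, hsym⟩ := key_sep Q hQ ht J hcover hjk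
  obtain ⟨i, hi⟩ := hnon m
  have hpi : myPart J hcover i = m := myPart_eq J hcover hdisj hi
  have hcj : myCore Q hQ ht J hcover j i = [mySym Q hQ ht J hcover j i] := by
    simp [myCore, hpi, hmj]
  have hck : myCore Q hQ ht J hcover k i = [mySym Q hQ ht J hcover k i] := by
    simp [myCore, hpi, hmk]
  refine ⟨i, ?_, ?_⟩
  · rw [hcj, hck]; exact singleton_not_prefix (hsym i hpi)
  · rw [hcj, hck]; exact singleton_not_prefix (fun hh => (hsym i hpi) hh.symm)

lemma dlen_core (hdisj : ∀ j k : Fin t, j ≠ k → Disjoint (J j) (J k)) (j : Fin t) :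
    dlen Q (myCore Q hQ ht J hcover j) = ∑ i ∈ (J j)ᶜ, Real.log (Q i) := by
  classical
  unfold dlen
  have hstep : ∀ i : Fin n,
      ((myCore Q hQ ht J hcover j i).length : ℝ) * Real.log (Q i)
        = if i ∈ (J j)ᶜ then Real.log (Q i) else 0 := by
    intro i
    by_cases h : i ∈ J j
    · have hp : myPart J hcover i = j := myPart_eq J hcover hdisj h
      simp [myCore, hp, h]
    · have hp : myPart J hcover i ≠ j := myPart_ne J hcover hdisj h
      simp [myCore, hp, h]
  rw [Finset.sum_congr rfl (fun i _ => hstep i), ← Finset.sum_filter]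
  congr 1
  ext i
  simp

lemma dlen_full (f : (i : Fin n) → Fin (Q i)) :
    dlen Q (fun i => [f i]) = ∑ i, Real.log (Q i) := by
  simp [dlen]

end Aux

/-- for any partition `{J_j}` of the channels (`t ≥ 3`), there is a
`Q`-ary prefix code achieving the entropy bound on the `Q^×`-ary selvage probability
assembly, where `q^×_j = ∏_{i ∈ J_j} q_i`. -/
theorem stmt11 {n t : ℕ} (hn : 1 ≤ n) (Q : Fin n → ℕ) (hQ : ∀ i, 2 ≤ Q i) (ht : 3 ≤ t)
    (J : Fin t → Finset (Fin n))
    (hdisj : ∀ j k : Fin t, j ≠ k → Disjoint (J j) (J k))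
    (hcover : ∀ i : Fin n, ∃ j : Fin t, i ∈ J j)
    (hne : ∀ j : Fin t, (J j).Nonempty)
    (Qx : Fin t → ℕ) (hQx : ∀ j, Qx j = ∏ i ∈ J j, Q i) :
    ∃ c : Fin (t + ((∏ j, Qx j) - (∑ j, Qx j))) → Word Q,
      Function.Injective c ∧
      (∀ j k, j ≠ k → PrefixFree (c j) (c k)) ∧
      (∀ j, dlen Q (c j) = -Real.log (spa Qx j)) ∧
      (∑ j, spa Qx j * dlen Q (c j)) = -∑ j, spa Qx j * Real.log (spa Qx j) := by
  classical
  have hQ0 : ∀ i, (Q i : ℝ) ≠ 0 := fun i =>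
    Nat.cast_ne_zero.mpr (by have := hQ i; omega)
  have hQxpos : ∀ j, 0 < Qx j := fun j => by
    rw [hQx]; exact Finset.prod_pos fun i _ => by have := hQ i; omega
  have h1 : (∏ j, Qx j) = ∏ i, Q i := by
    rw [Finset.prod_congr rfl fun j _ => hQx j]
    exact prod_parts Q J hcover hdisj
  have h2 : (∑ j, Qx j) = ∑ j : Fin t, ∏ i ∈ J j, Q i :=
    Finset.sum_congr rfl fun j _ => hQx j
  have hcardGood : (myGood Q hQ ht J hcover).card = (∏ j, Qx j) - (∑ j, Qx j) := by
    rw [card_myGood Q hQ ht J hcover hdisj hne, h1, h2]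
  let full : Fin ((∏ j, Qx j) - (∑ j, Qx j)) → ((i : Fin n) → Fin (Q i)) :=
    fun m => ((myGood Q hQ ht J hcover).equivFin.symm (Fin.cast hcardGood.symm m) :
      {x // x ∈ myGood Q hQ ht J hcover}).1
  have hfull_mem : ∀ m, full m ∈ myGood Q hQ ht J hcover := fun m =>
    ((myGood Q hQ ht J hcover).equivFin.symm (Fin.cast hcardGood.symm m)).2
  have hfull_good : ∀ m (j : Fin t), ∃ i, myPart J hcover i ≠ j ∧
      full m i ≠ mySym Q hQ ht J hcover j i := by
    intro m j
    have := hfull_mem m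
    rw [myGood, Finset.mem_filter] at this
    exact this.2 j
  have hfull_inj : Function.Injective full := by
    intro a b hab
    have h1 := (myGood Q hQ ht J hcover).equivFin.symm.injective (Subtype.ext hab)
    have h2 : (a : ℕ) = (b : ℕ) := by
      simpa [Fin.coe_cast] using congrArg Fin.val h1
    exact Fin.ext h2
  let cw : Fin (t + ((∏ j, Qx j) - (∑ j, Qx j))) → Word Q :=
    fun j => if h : (j : ℕ) < t then myCore Q hQ ht J hcover ⟨j, h⟩
      else (fun i => [full ⟨(j : ℕ) - t, by have := j.isLt; omega⟩ i])
  have hpf : ∀ j k, j ≠ k → PrefixFree (cw j) (cw k) := by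
    intro j k hjk
    have hvjk : (j : ℕ) ≠ (k : ℕ) := fun hh => hjk (Fin.ext hh)
    by_cases hj : (j : ℕ) < t <;> by_cases hk : (k : ℕ) < t
    · simp only [cw, dif_pos hj, dif_pos hk]
      refine core_prefixFree Q hQ ht J hcover hdisj hne ?_
      intro hh
      apply hvjk
      have : ((⟨(j : ℕ), hj⟩ : Fin t) : ℕ) = ((⟨(k : ℕ), hk⟩ : Fin t) : ℕ) := by rw [hh]
      exact this
    · simp only [cw, dif_pos hj, dif_neg hk]
      obtain ⟨i, hi1, hi2⟩ := hfull_good ⟨(k : ℕ) - t, by have := k.isLt; omega⟩ ⟨j, hj⟩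
      refine ⟨i, ?_, ?_⟩
      · rw [show myCore Q hQ ht J hcover ⟨j, hj⟩ i
            = [mySym Q hQ ht J hcover ⟨j, hj⟩ i] by simp [myCore, hi1]]
        exact singleton_not_prefix (fun hh => hi2 hh.symm)
      · rw [show myCore Q hQ ht J hcover ⟨j, hj⟩ i
            = [mySym Q hQ ht J hcover ⟨j, hj⟩ i] by simp [myCore, hi1]]
        exact singleton_not_prefix hi2
    · simp only [cw, dif_neg hj, dif_pos hk]
      obtain ⟨i, hi1, hi2⟩ := hfull_good ⟨(j : ℕ) - t, by have := j.isLt; omega⟩ ⟨k, hk⟩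
      refine ⟨i, ?_, ?_⟩
      · rw [show myCore Q hQ ht J hcover ⟨k, hk⟩ i
            = [mySym Q hQ ht J hcover ⟨k, hk⟩ i] by simp [myCore, hi1]]
        exact singleton_not_prefix hi2
      · rw [show myCore Q hQ ht J hcover ⟨k, hk⟩ i
            = [mySym Q hQ ht J hcover ⟨k, hk⟩ i] by simp [myCore, hi1]]
        exact singleton_not_prefix (fun hh => hi2 hh.symm)
    · simp only [cw, dif_neg hj, dif_neg hk]
      have hmm : (⟨(j : ℕ) - t, by have := j.isLt; omega⟩ :
            Fin ((∏ j, Qx j) - (∑ j, Qx j)))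
          ≠ ⟨(k : ℕ) - t, by have := k.isLt; omega⟩ := by
        intro hh
        have := congrArg Fin.val hh
        simp only at this
        omega
      have hfne : full ⟨(j : ℕ) - t, by have := j.isLt; omega⟩
          ≠ full ⟨(k : ℕ) - t, by have := k.isLt; omega⟩ := fun hh => hmm (hfull_inj hh)
      obtain ⟨i, hi⟩ := Function.ne_iff.mp hfne
      exact ⟨i, singleton_not_prefix hi, singleton_not_prefix (fun hh => hi hh.symm)⟩
  have hinj : Function.Injective cw := by
    intro j k heq
    by_contra hjk
    obtain ⟨i, hbad, -⟩ := hpf j k hjk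
    rw [heq] at hbad
    exact hbad (List.prefix_refl _)
  have hD : (((∏ i : Fin t, Qx i : ℕ)) : ℝ) = ((∏ i, Q i : ℕ) : ℝ) :=
    congrArg (fun x : ℕ => (x : ℝ)) h1
  have hlogD : Real.log ((∏ i, Q i : ℕ) : ℝ) = ∑ i, Real.log (Q i) := by
    rw [Nat.cast_prod]
    exact Real.log_prod (fun i _ => hQ0 i)
  have hD0 : ((∏ i, Q i : ℕ) : ℝ) ≠ 0 :=
    Nat.cast_ne_zero.mpr (Finset.prod_pos fun i _ => by have := hQ i; omega).ne'
  have hlen : ∀ j, dlen Q (cw j) = -Real.log (spa Qx j) := by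
    intro j
    by_cases hj : (j : ℕ) < t
    · simp only [cw, dif_pos hj]
      rw [dlen_core Q hQ ht J hcover hdisj]
      unfold spa
      rw [dif_pos hj, hD,
        Real.log_div (Nat.cast_ne_zero.mpr (hQxpos ⟨j, hj⟩).ne') hD0, neg_sub, hlogD]
      have hlogQx : Real.log ((Qx ⟨j, hj⟩ : ℕ) : ℝ)
          = ∑ i ∈ J ⟨j, hj⟩, Real.log (Q i) := by
        rw [hQx, Nat.cast_prod]
        exact Real.log_prod (fun i _ => hQ0 i)
      rw [hlogQx]
      have := Finset.sum_add_sum_compl (J ⟨j, hj⟩) (fun i => Real.log (Q i))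
      linarith
    · simp only [cw, dif_neg hj]
      rw [dlen_full]
      unfold spa
      rw [dif_neg hj, hD, one_div, Real.log_inv, neg_neg, hlogD]
  refine ⟨cw, hinj, hpf, hlen, ?_⟩
  rw [← Finset.sum_neg_distrib]
  exact Finset.sum_congr rfl fun j _ => by rw [hlen j]; ring
end

section
/- Multichannel Kraft inequality: for any uniquely decodable finite family (c_j)_{j<m} of Q-ary words, Σ_{j<m} exp(−|c_j|) ≤ 1; equivalently, Σ_{j<m} ∏_{i<n} q_i^{−len(c_j(i))} ≤ 1. -/
open scoped Classical

private lemma kraft_aux {n m : ℕ} (Q : Fin n → ℕ) (hQ : ∀ i, 2 ≤ Q i)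
    (c : Fin m → Word Q) (hud : UniquelyDecodable c) :
    (∑ j, ∏ i, ((Q i : ℝ) ^ ((c j) i).length)⁻¹) ≤ 1 := by
  classical
  set S : ℝ := ∑ j, ∏ i, ((Q i : ℝ) ^ ((c j) i).length)⁻¹ with hS
  have hQpos : ∀ i, (0:ℝ) < (Q i : ℝ) := fun i => by
    have : (0:ℕ) < Q i := by have := hQ i; omega
    exact_mod_cast this
  set M : ℕ := Finset.univ.sup (fun j : Fin m => Finset.univ.sup fun i => ((c j) i).length)
    with hM
  have hlen : ∀ j i, ((c j) i).length ≤ M := fun j i =>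
    le_trans (Finset.le_sup (f := fun i => ((c j) i).length) (Finset.mem_univ i))
      (Finset.le_sup (f := fun j : Fin m => Finset.univ.sup fun i => ((c j) i).length)
        (Finset.mem_univ j))
  have stepB : ∀ k : ℕ, S ^ k ≤ ((k * M + 1 : ℕ) : ℝ) ^ n := by
    intro k
    rw [hS, Fintype.sum_pow]
    set φ : (Fin k → Fin m) → (Fin n → ℕ) := fun g i => ∑ t, ((c (g t)) i).length with hφ
    have hterm : ∀ g : Fin k → Fin m,
        (∏ t, ∏ i, ((Q i : ℝ) ^ ((c (g t)) i).length)⁻¹) = ∏ i, ((Q i : ℝ) ^ (φ g i))⁻¹ := by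
      intro g
      rw [Finset.prod_comm]
      refine Finset.prod_congr rfl fun i _ => ?_
      rw [Finset.prod_inv_distrib, Finset.prod_pow_eq_pow_sum]
    set T : Finset (Fin n → ℕ) := Fintype.piFinset fun _ => Finset.range (k * M + 1) with hT
    have hmaps : ∀ g : Fin k → Fin m, φ g ∈ T := by
      intro g
      rw [hT, Fintype.mem_piFinset]
      intro i
      rw [Finset.mem_range, Nat.lt_succ_iff]
      calc φ g i ≤ ∑ _t : Fin k, M := Finset.sum_le_sum fun t _ => hlen _ _
        _ = k * M := by simp [mul_comm]
    have hcard : ∀ ℓ : Fin n → ℕ,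
        ((Finset.univ.filter fun g : Fin k → Fin m => φ g = ℓ)).card ≤ ∏ i, Q i ^ ℓ i := by
      intro ℓ
      set B : Finset (Word Q) :=
        (Finset.univ : Finset (∀ i, List.Vector (Fin (Q i)) (ℓ i))).image
          (fun v => (fun i => List.Vector.toList (v i) : Word Q)) with hB
      have hBcard : B.card ≤ ∏ i, Q i ^ ℓ i := by
        refine le_trans Finset.card_image_le ?_
        rw [Finset.card_univ, Fintype.card_pi]
        exact le_of_eq (Finset.prod_congr rfl fun i _ => by simp [card_vector])
      refine le_trans (Finset.card_le_card_of_injOn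
        (fun g => (fun i => ((List.ofFn g).map fun j => c j i).flatten : Word Q)) ?_ ?_) hBcard
      · intro g hg
        simp only [Finset.mem_coe, Finset.mem_filter] at hg
        have hl : ∀ i, (((List.ofFn g).map fun j => c j i).flatten).length = ℓ i := by
          intro i
          rw [List.map_ofFn, List.length_flatten, List.map_ofFn, List.sum_ofFn, ← hg.2]
          rfl
        rw [hB]
        exact Finset.mem_image.2 ⟨fun i => ⟨_, hl i⟩, Finset.mem_univ _, rfl⟩
      · intro g _ g' _ h
        exact List.ofFn_injective (hud h)
    calc (∑ g : Fin k → Fin m, ∏ t, ∏ i, ((Q i : ℝ) ^ ((c (g t)) i).length)⁻¹)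
        = ∑ ℓ ∈ T, ∑ g ∈ Finset.univ.filter (fun g => φ g = ℓ),
            ∏ i, ((Q i:ℝ) ^ (φ g i))⁻¹ := by
          rw [Finset.sum_fiberwise_of_maps_to (fun g _ => hmaps g)]
          exact Finset.sum_congr rfl fun g _ => hterm g
      _ ≤ ∑ _ℓ ∈ T, 1 := by
          refine Finset.sum_le_sum fun ℓ _ => ?_
          have hconst : (∑ g ∈ Finset.univ.filter (fun g : Fin k → Fin m => φ g = ℓ),
              ∏ i, ((Q i:ℝ) ^ (φ g i))⁻¹)
              = ((Finset.univ.filter fun g : Fin k → Fin m => φ g = ℓ)).card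
                * ∏ i, ((Q i:ℝ) ^ (ℓ i))⁻¹ := by
            rw [Finset.sum_congr rfl (fun g hg => by
              rw [(Finset.mem_filter.1 hg).2]), Finset.sum_const, nsmul_eq_mul]
          rw [hconst]
          have hcast : (((Finset.univ.filter fun g : Fin k → Fin m => φ g = ℓ)).card : ℝ)
              ≤ ∏ i, (Q i:ℝ) ^ (ℓ i) := by
            calc (((Finset.univ.filter fun g : Fin k → Fin m => φ g = ℓ)).card : ℝ)
                ≤ ((∏ i, Q i ^ ℓ i : ℕ) : ℝ) := Nat.cast_le.2 (hcard ℓ)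
              _ = ∏ i, (Q i:ℝ) ^ (ℓ i) := by push_cast; rfl
          calc ((Finset.univ.filter fun g : Fin k → Fin m => φ g = ℓ)).card
                * ∏ i, ((Q i:ℝ) ^ (ℓ i))⁻¹
              ≤ (∏ i, (Q i:ℝ) ^ (ℓ i)) * ∏ i, ((Q i:ℝ) ^ (ℓ i))⁻¹ := by
                refine mul_le_mul_of_nonneg_right hcast ?_
                refine Finset.prod_nonneg fun i _ => ?_
                have := hQpos i; positivity
            _ = 1 := by
                rw [← Finset.prod_mul_distrib]
                refine Finset.prod_eq_one fun i _ => ?_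
                have := hQpos i
                field_simp
      _ = (T.card : ℝ) := by rw [Finset.sum_const, nsmul_eq_mul, mul_one]
      _ = ((k * M + 1 : ℕ) : ℝ) ^ n := by
          rw [hT, Fintype.card_piFinset]
          simp
  by_contra hcon
  push_neg at hcon
  have hSpos : 0 < S := lt_trans one_pos hcon
  have hinv : ‖S⁻¹‖ < 1 := by
    rw [Real.norm_eq_abs, abs_of_pos (by positivity)]
    exact inv_lt_one_of_one_lt₀ hcon
  have htend : Filter.Tendsto (fun k : ℕ => ((M+1:ℝ))^n * ((k:ℝ)^n * (S⁻¹)^k))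
      Filter.atTop (nhds 0) := by
    have h0 : Filter.Tendsto (fun k : ℕ => (k:ℝ)^n * (S⁻¹)^k) Filter.atTop (nhds 0) :=
      (summable_pow_mul_geometric_of_norm_lt_one n hinv).tendsto_atTop_zero
    simpa using h0.const_mul ((M+1:ℝ)^n)
  obtain ⟨k, hk1, hk2⟩ := ((htend.eventually_lt_const one_pos).and
    (Filter.eventually_ge_atTop 1)).exists
  have e1 : (1:ℝ) = S^k * (S⁻¹)^k := by
    rw [← mul_pow, mul_inv_cancel₀ (ne_of_gt hSpos), one_pow]
  have e2 : S^k * (S⁻¹)^k ≤ ((k*M+1:ℕ):ℝ)^n * (S⁻¹)^k :=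
    mul_le_mul_of_nonneg_right (stepB k) (by positivity)
  have e3 : ((k*M+1:ℕ):ℝ)^n ≤ ((M+1:ℝ)*(k:ℝ))^n := by
    apply pow_le_pow_left₀ (by positivity)
    have hk1' : (1:ℝ) ≤ (k:ℝ) := by exact_mod_cast hk2
    push_cast
    nlinarith [hk1', (0:ℝ) ≤ (M:ℝ)]
  have e4 : ((k*M+1:ℕ):ℝ)^n * (S⁻¹)^k ≤ (M+1:ℝ)^n * ((k:ℝ)^n * (S⁻¹)^k) := by
    rw [← mul_assoc, ← mul_pow]
    exact mul_le_mul_of_nonneg_right e3 (by positivity)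
  linarith [hk1]

/-- Multichannel Kraft inequality: for any uniquely decodable finite
family of `Q`-ary words, `Σ_j exp(−|c_j|) ≤ 1`, equivalently
`Σ_j ∏_i q_i^{−len(c_j(i))} ≤ 1`. -/
theorem stmt13 {n m : ℕ} (hn : 1 ≤ n) (Q : Fin n → ℕ) (hQ : ∀ i, 2 ≤ Q i)
    (c : Fin m → Word Q) (hud : UniquelyDecodable c) :
    (∑ j, Real.exp (-dlen Q (c j))) ≤ 1 ∧
    (∑ j, ∏ i, ((Q i : ℝ) ^ ((c j) i).length)⁻¹) ≤ 1 := by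
  have key := kraft_aux Q hQ c hud
  have hQpos : ∀ i, (0:ℝ) < (Q i : ℝ) := fun i => by
    have : (0:ℕ) < Q i := by have := hQ i; omega
    exact_mod_cast this
  have hexp : ∀ j, Real.exp (-dlen Q (c j)) = ∏ i, ((Q i : ℝ) ^ ((c j) i).length)⁻¹ := by
    intro j
    rw [dlen, ← Finset.sum_neg_distrib, Real.exp_sum]
    refine Finset.prod_congr rfl fun i _ => ?_
    rw [Real.exp_neg, Real.exp_nat_mul, Real.exp_log (hQpos i)]
  exact ⟨by rw [Finset.sum_congr rfl fun j _ => hexp j]; exact key, key⟩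
end

section
/- If n ≤ 2, then every finite Q-ary prefix code is tree-decodable; in particular, all single-channel and two-channel prefix codes are tree-decodable. -/
open scoped Classical

private lemma fin_eq_or_eq {n : ℕ} (hn2 : n ≤ 2) (i j k : Fin n) (hij : i ≠ j) :
    k = i ∨ k = j := by
  have hi := i.isLt; have hj := j.isLt; have hk := k.isLt
  have hij' : (i : ℕ) ≠ (j : ℕ) := fun h => hij (Fin.ext h)
  by_contra h
  push_neg at h
  obtain ⟨h1, h2⟩ := h
  have h1' : (k : ℕ) ≠ (i : ℕ) := fun h => h1 (Fin.ext h)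
  have h2' : (k : ℕ) ≠ (j : ℕ) := fun h => h2 (Fin.ext h)
  omega

private lemma stmt17_aux {n : ℕ} (hn1 : 1 ≤ n) (hn2 : n ≤ 2) (Q : Fin n → ℕ) :
    ∀ N (C : Finset (Word Q)),
      (∑ c ∈ C, ∑ i, (c i).length) ≤ N →
      (∀ c ∈ C, ∀ c' ∈ C, c ≠ c' → PrefixFree c c') →
      TreeDecodable Q C := by
  intro N
  induction N using Nat.strong_induction_on with
  | _ N ih =>
  intro C hM hpf
  rcases Finset.eq_empty_or_nonempty C with rfl | hCne
  · exact TreeDecodable.empty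
  set e : Word Q := (fun _ => [] : Word Q) with he
  by_cases heC : e ∈ C
  · -- then C = {e}
    have hC : C = {e} := by
      apply Finset.eq_singleton_iff_unique_mem.2
      refine ⟨heC, fun c hc => ?_⟩
      by_contra hce
      obtain ⟨i, h1, h2⟩ := hpf c hc e heC hce
      exact h2 (List.nil_prefix)
    rw [hC]
    exact TreeDecodable.single
  · -- there is a channel on which every word is nonempty
    have hchan : ∃ i : Fin n, ∀ c ∈ C, c i ≠ [] := by
      by_contra h
      push_neg at h
      choose g hgC hge using h
      by_cases hgg : ∀ i j : Fin n, g i = g j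
      · apply heC
        have h0 : g ⟨0, hn1⟩ = e := by
          funext j
          rw [hgg ⟨0, hn1⟩ j]
          exact hge j
        rw [← h0]
        exact hgC _
      · push_neg at hgg
        obtain ⟨i, j, hij⟩ := hgg
        obtain ⟨k, h1, h2⟩ := hpf (g i) (hgC i) (g j) (hgC j) hij
        rcases fin_eq_or_eq hn2 i j k (fun h => hij (by rw [h])) with rfl | rfl
        · exact h1 (by rw [hge k]; exact List.nil_prefix)
        · exact h2 (by rw [hge k]; exact List.nil_prefix)
    obtain ⟨i, hne⟩ := hchan
    refine TreeDecodable.node C i hne (fun a => ?_)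
    set F := C.filter (fun c => (c i).head? = some a) with hF
    have hcons : ∀ c ∈ F, c i = a :: (c i).tail := by
      intro c hc
      have hh := (Finset.mem_filter.1 hc).2
      cases hci : c i with
      | nil => rw [hci] at hh; simp at hh
      | cons b t =>
        rw [hci] at hh
        simp at hh
        simp [hh]
    have hinj : ∀ c ∈ F, ∀ c' ∈ F,
        Function.update c i (c i).tail = Function.update c' i (c' i).tail → c = c' := by
      intro c hc c' hc' hcc
      funext j
      by_cases hj : j = i
      · subst hj
        have ht : (c j).tail = (c' j).tail := by
          have := congrFun hcc j
          simpa using this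
        rw [hcons c hc, hcons c' hc', ht]
      · have := congrFun hcc j
        simpa [Function.update_of_ne hj] using this
    rcases Finset.eq_empty_or_nonempty (child C i a) with hch | hchne
    · rw [hch]; exact TreeDecodable.empty
    have hFne : F.Nonempty := by
      obtain ⟨x, hx⟩ := hchne
      obtain ⟨c, hc, _⟩ := Finset.mem_image.1 hx
      exact ⟨c, hc⟩
    have hlen : ∀ c ∈ F, (∑ j, ((Function.update c i (c i).tail) j).length) + 1
        = ∑ j, (c j).length := by
      intro c hc
      rw [← Finset.sum_erase_add Finset.univ (fun j => (c j).length) (Finset.mem_univ i),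
        ← Finset.sum_erase_add Finset.univ
          (fun j => ((Function.update c i (c i).tail) j).length) (Finset.mem_univ i)]
      have h1 : ∑ j ∈ Finset.univ.erase i,
          ((Function.update c i (c i).tail) j).length
          = ∑ j ∈ Finset.univ.erase i, (c j).length := by
        apply Finset.sum_congr rfl
        intro j hj
        rw [Function.update_of_ne (Finset.mem_erase.1 hj).1]
      have h2 : ((Function.update c i (c i).tail) i).length + 1 = (c i).length := by
        rw [Function.update_self]
        conv_rhs => rw [hcons c hc]
        simp
      rw [h1, ← h2]
      exact Nat.add_assoc _ _ _
    -- measure of the child is strictly smaller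
    have hsum : (∑ x ∈ child C i a, ∑ j, (x j).length)
        = ∑ c ∈ F, ∑ j, ((Function.update c i (c i).tail) j).length := by
      rw [child]
      exact Finset.sum_image hinj
    have hMlt : (∑ x ∈ child C i a, ∑ j, (x j).length) < N := by
      have h3 : (∑ x ∈ child C i a, ∑ j, (x j).length) + F.card
          = ∑ c ∈ F, ∑ j, (c j).length := by
        rw [hsum, ← Finset.sum_congr rfl hlen, Finset.sum_add_distrib,
          Finset.sum_const, smul_eq_mul, mul_one]
      have h4 : ∑ c ∈ F, ∑ j, (c j).length ≤ ∑ c ∈ C, ∑ j, (c j).length :=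
        Finset.sum_le_sum_of_subset (Finset.filter_subset _ _)
      have h5 : 0 < F.card := Finset.card_pos.2 hFne
      calc (∑ x ∈ child C i a, ∑ j, (x j).length)
          < (∑ x ∈ child C i a, ∑ j, (x j).length) + F.card :=
            Nat.lt_add_of_pos_right h5
        _ = ∑ c ∈ F, ∑ j, (c j).length := h3
        _ ≤ ∑ c ∈ C, ∑ j, (c j).length := h4
        _ ≤ N := hM
    -- the child is a prefix code
    apply ih _ hMlt (child C i a) (le_refl _)
    intro x hx y hy hxy
    obtain ⟨c, hc, hcx⟩ := Finset.mem_image.1 hx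
    obtain ⟨c', hc', hcy⟩ := Finset.mem_image.1 hy
    have hcc : c ≠ c' := by
      rintro rfl
      exact hxy (hcx.symm.trans hcy)
    obtain ⟨k, h1, h2⟩ := hpf c (Finset.mem_of_mem_filter c hc) c'
      (Finset.mem_of_mem_filter c' hc') hcc
    refine ⟨k, ?_, ?_⟩
    · intro hp
      apply h1
      subst hcx; subst hcy
      by_cases hk : k = i
      · subst hk
        rw [Function.update_self, Function.update_self] at hp
        rw [hcons c hc, hcons c' hc']
        exact List.cons_prefix_cons.2 ⟨rfl, hp⟩
      · rwa [Function.update_of_ne hk, Function.update_of_ne hk] at hp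
    · intro hp
      apply h2
      subst hcx; subst hcy
      by_cases hk : k = i
      · subst hk
        rw [Function.update_self, Function.update_self] at hp
        rw [hcons c hc, hcons c' hc']
        exact List.cons_prefix_cons.2 ⟨rfl, hp⟩
      · rwa [Function.update_of_ne hk, Function.update_of_ne hk] at hp

/-- for `n ≤ 2`, every finite `Q`-ary prefix code is tree-decodable. -/
theorem stmt17 {n : ℕ} (hn1 : 1 ≤ n) (hn2 : n ≤ 2) (Q : Fin n → ℕ) (hQ : ∀ i, 2 ≤ Q i)
    (C : Finset (Word Q))
    (hpf : ∀ c ∈ C, ∀ c' ∈ C, c ≠ c' → PrefixFree c c') :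
    TreeDecodable Q C :=
  stmt17_aux hn1 hn2 Q (∑ c ∈ C, ∑ i, (c i).length) C (le_refl _) hpf
end
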